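/- arXiv:2307.13926 — 5 statements merged into one kernel-verified Lean document; each statement's English description precedes it below -/
import Mathlib

section
/- Let f : {−1,1}^n → [−1,1] and t ≥ 0 be such that for every subset T ⊆ [n] and every assignment w ∈ {−1,1}^{[n]∖T}, the restricted function f_{T,w} : {−1,1}^T → [−1,1] defined by f_{T,w}(u) = f(u,w) satisfies L_{1,1}(f_{T,w}) ≤ t. Then for every ρ ∈ (−1,1), |E_{z∼μ_ρ}[f(z)] − E_{z∼μ_0}[f(z)]| ≤ ln(1/(1−|ρ|))·t, where μ_ρ is the product distribution on {−1,1}^n in which each coordinate independently equals 1 with probability (1+ρ)/2. -/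
open MeasureTheory ProbabilityTheory Finset Real

noncomputable section

/-- Sign encoding of a Boolean: `false ↦ 1`, `true ↦ -1`.
Note `sgnb (xor a b) = sgnb a * sgnb b`. -/
def sgnb (b : Bool) : ℝ := if b then -1 else 1

/-- Fourier coefficient of `f : {-1,1}^n → ℝ` at `S ⊆ [n]`:
`f̂(S) = 2^{-n} ∑_z f(z) ∏_{i∈S} z_i`. -/
def bFourier {n : ℕ} (f : (Fin n → Bool) → ℝ) (S : Finset (Fin n)) : ℝ :=
  ((2 : ℝ) ^ n)⁻¹ * ∑ z : Fin n → Bool, f z * ∏ i ∈ S, sgnb (z i)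

/-- Level-`k` Fourier weight `L_{1,k}(f) = ∑_{|S|=k} |f̂(S)|`. -/
def levelWeight {n : ℕ} (f : (Fin n → Bool) → ℝ) (k : ℕ) : ℝ :=
  ∑ S ∈ Finset.univ.filter (fun S : Finset (Fin n) => S.card = k), |bFourier f S|

/-- Deterministic two-party communication protocol on `A × B`: a rooted binary
tree where each internal node is owned by one of the players and labeled by a
function of that player's input selecting a child, and each leaf is labeled by
an output in `{-1,1}` (encoded as a `Bool`). -/
inductive Protocol (A B : Type) : Type
  | leaf (out : Bool) : Protocol A B
  | nodeA (next : A → Bool) (l r : Protocol A B) : Protocol A B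
  | nodeB (next : B → Bool) (l r : Protocol A B) : Protocol A B

namespace Protocol

/-- Depth (= communication cost) of a protocol. -/
def depth {A B : Type} : Protocol A B → ℕ
  | leaf _ => 0
  | nodeA _ l r => max (depth l) (depth r) + 1
  | nodeB _ l r => max (depth l) (depth r) + 1

/-- The `±1` output of a protocol on a given input pair. -/
def eval {A B : Type} : Protocol A B → A → B → ℝ
  | leaf o, _, _ => sgnb o
  | nodeA f l r, a, b => if f a then eval r a b else eval l a b
  | nodeB f l r, a, b => if f b then eval r a b else eval l a b

end Protocol

/-- Value of a randomized protocol: a finitely supported convex combination of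
deterministic protocols, evaluated as the expected output. -/
def rvalue {A B ι : Type} [Fintype ι] (p : ι → ℝ) (P : ι → Protocol A B)
    (a : A) (b : B) : ℝ :=
  ∑ i, p i * (P i).eval a b

/-- XOR-fiber of `C : {-1,1}^n × {-1,1}^n → ℝ`:
`h(z) = 2^{-n} ∑_x C(x, x ⊙ z)`. -/
def xorFiber {n : ℕ} (C : (Fin n → Bool) → (Fin n → Bool) → ℝ) (z : Fin n → Bool) : ℝ :=
  ((2 : ℝ) ^ n)⁻¹ * ∑ x : Fin n → Bool, C x (fun i => xor (x i) (z i))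

/-- Expectation of `f` under the biased product distribution `μ_ρ` on
`{-1,1}^n`, where each coordinate is independently `1` with probability
`(1+ρ)/2` (so a point `z` has probability `∏_j (1 + ρ·z_j)/2`). -/
def biasedExp {n : ℕ} (ρ : ℝ) (f : (Fin n → Bool) → ℝ) : ℝ :=
  ∑ z : Fin n → Bool, (∏ j, (1 + ρ * sgnb (z j)) / 2) * f z

section aux
variable {n : ℕ}

lemma fiber_card (T : Finset (Fin n)) (σ : Bool) (z : Fin n → Bool)
    (hz : ∀ i, i ∉ T → z i = σ) :
    (Finset.univ.filter fun u : Fin n → Bool =>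
      (fun i => if i ∈ T then u i else σ) = z).card = 2 ^ (n - T.card) := by
  have : (Finset.univ.filter fun u : Fin n → Bool =>
      (fun i => if i ∈ T then u i else σ) = z)
      = Fintype.piFinset (fun i => if i ∈ T then {z i} else Finset.univ) := by
    ext u
    simp only [Finset.mem_filter, Finset.mem_univ, true_and, Fintype.mem_piFinset,
      funext_iff]
    constructor
    · intro h i
      by_cases hi : i ∈ T
      · simpa [hi] using h i
      · simp [hi]
    · intro h i
      by_cases hi : i ∈ T
      · have := h i; simpa [hi] using this
      · simp [hi, hz i hi]
  rw [this, Fintype.card_piFinset]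
  have : ∀ i : Fin n, ((if i ∈ T then ({z i} : Finset Bool) else Finset.univ)).card
      = if i ∈ T then 1 else 2 := by
    intro i; by_cases hi : i ∈ T <;> simp [hi]
  rw [Finset.prod_congr rfl (fun i _ => this i)]
  rw [Finset.prod_ite, Finset.prod_const, Finset.prod_const]
  simp only [one_pow, one_mul]
  congr 1
  rw [Finset.filter_not, Finset.card_sdiff_of_subset (Finset.filter_subset _ _)]
  congr 1
  · simp [Finset.card_univ]
  · simp [Finset.filter_mem_eq_inter]

lemma sum_sel (T : Finset (Fin n)) (σ : Bool) (G : (Fin n → Bool) → ℝ) :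
    ∑ u : Fin n → Bool, G (fun i => if i ∈ T then u i else σ)
    = 2 ^ (n - T.card) *
        ∑ z : Fin n → Bool, (if ∀ i, i ∉ T → z i = σ then G z else 0) := by
  have h1 : ∀ u : Fin n → Bool, G (fun i => if i ∈ T then u i else σ)
      = ∑ z : Fin n → Bool, if (fun i => if i ∈ T then u i else σ) = z then G z else 0 := by
    intro u
    rw [Finset.sum_ite_eq (Finset.univ) _ G]
    simp
  calc ∑ u : Fin n → Bool, G (fun i => if i ∈ T then u i else σ)
      = ∑ u : Fin n → Bool, ∑ z : Fin n → Bool,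
          if (fun i => if i ∈ T then u i else σ) = z then G z else 0 := by
        exact Finset.sum_congr rfl fun u _ => h1 u
    _ = ∑ z : Fin n → Bool, ∑ u : Fin n → Bool,
          if (fun i => if i ∈ T then u i else σ) = z then G z else 0 := Finset.sum_comm
    _ = 2 ^ (n - T.card) * ∑ z : Fin n → Bool, (if ∀ i, i ∉ T → z i = σ then G z else 0) := by
        rw [Finset.mul_sum]
        refine Finset.sum_congr rfl fun z _ => ?_
        rw [Finset.sum_ite, Finset.sum_const, Finset.sum_const_zero, add_zero]
        by_cases hz : ∀ i, i ∉ T → z i = σ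
        · rw [if_pos hz, fiber_card T σ z hz, nsmul_eq_mul]
          push_cast
          ring
        · rw [if_neg hz]
          have he : (Finset.univ.filter fun u : Fin n → Bool =>
              (fun i => if i ∈ T then u i else σ) = z) = ∅ := by
            rw [Finset.filter_eq_empty_iff]
            intro u _ hu
            push_neg at hz
            obtain ⟨i, hiT, hiz⟩ := hz
            exact hiz (by simpa [hiT] using (congrFun hu i).symm)
          rw [he]
          simp

lemma bFourier_sel (f : (Fin n → Bool) → ℝ) (T : Finset (Fin n)) (σ : Bool) (j : Fin n) :
    bFourier (fun u : Fin n → Bool => f (fun i => if i ∈ T then u i else σ)) {j}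
    = if j ∈ T then ((2:ℝ) ^ T.card)⁻¹ *
        ∑ z : Fin n → Bool, (if ∀ i, i ∉ T → z i = σ then f z * sgnb (z j) else 0)
      else 0 := by
  unfold bFourier
  simp only [Finset.prod_singleton]
  by_cases hj : j ∈ T
  · rw [if_pos hj]
    have : ∀ u : Fin n → Bool,
        f (fun i => if i ∈ T then u i else σ) * sgnb (u j)
        = (fun z => f z * sgnb (z j)) (fun i => if i ∈ T then u i else σ) := by
      intro u; simp [hj]
    rw [Finset.sum_congr rfl fun u _ => this u, sum_sel T σ (fun z => f z * sgnb (z j))]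
    rw [← mul_assoc]
    congr 1
    have hTn : T.card ≤ n := by simpa using Finset.card_le_card (Finset.subset_univ T)
    have h2 : (2:ℝ)^n = 2^(T.card) * 2^(n-T.card) := by
      rw [← pow_add]; congr 1; omega
    rw [h2, mul_inv, mul_assoc, inv_mul_cancel₀ (by positivity), mul_one]
  · rw [if_neg hj]
    have key : ∑ u : Fin n → Bool,
        f (fun i => if i ∈ T then u i else σ) * sgnb (u j) = 0 := by
      refine Finset.sum_involution (fun u _ => Function.update u j (!u j)) ?_ ?_ ?_ ?_
      · intro u _
        have hsel : (fun i => if i ∈ T then Function.update u j (!u j) i else σ)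
            = (fun i => if i ∈ T then u i else σ) := by
          funext i
          by_cases hi : i ∈ T
          · have : i ≠ j := fun h => hj (h ▸ hi)
            simp [hi, Function.update_of_ne this]
          · simp [hi]
        rw [hsel]
        have : sgnb (Function.update u j (!u j) j) = - sgnb (u j) := by
          simp [Function.update_self]
          cases u j <;> simp [sgnb]
        rw [this]
        ring
      · intro u _ _
        intro h
        have := congrFun h j
        simp [Function.update_self] at this
      · intro u _; exact Finset.mem_univ _
      · intro u _
        funext i
        by_cases hi : i = j
        · subst hi; simp [Function.update_self]
        · simp [Function.update_of_ne hi]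
    rw [key, mul_zero]

lemma h_decomp (ρ : ℝ) (b : Bool) :
    (1 + ρ * sgnb b) / 2
      = (1 - |ρ|) / 2 + |ρ| * (if b = decide (ρ < 0) then 1 else 0) := by
  rcases lt_or_ge ρ 0 with h | h
  · cases b <;> simp [sgnb, abs_of_neg h, h] <;> ring
  · cases b <;> simp [sgnb, abs_of_nonneg h, not_lt.2 h] <;> ring

lemma key (f : (Fin n → Bool) → ℝ) (ρ : ℝ) (j : Fin n) :
    ∑ T : Finset (Fin n), (1-|ρ|)^T.card * |ρ|^(n-T.card) *
      bFourier (fun u : Fin n → Bool =>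
        f (fun i => if i ∈ T then u i else decide (ρ < 0))) {j}
    = (1-|ρ|) * ∑ z : Fin n → Bool,
        (sgnb (z j) / 2 * ∏ k ∈ Finset.univ.erase j, ((1 + ρ * sgnb (z k)) / 2)) * f z := by
  set σ := decide (ρ < 0) with hσ
  set a := (1 - |ρ|) / 2 with ha
  set C : Finset (Fin n) → ℝ := fun T =>
    a ^ T.card * |ρ| ^ (n - T.card) *
      ∑ z : Fin n → Bool, (if ∀ i, i ∉ T → z i = σ then f z * sgnb (z j) else 0) with hC
  have hL : (∑ T : Finset (Fin n), (1-|ρ|)^T.card * |ρ|^(n-T.card) *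
      bFourier (fun u : Fin n → Bool =>
        f (fun i => if i ∈ T then u i else σ)) {j})
      = ∑ S ∈ (Finset.univ.erase j).powerset, C (insert j S) := by
    have h1 : ∀ T : Finset (Fin n), (1-|ρ|)^T.card * |ρ|^(n-T.card) *
        bFourier (fun u : Fin n → Bool =>
          f (fun i => if i ∈ T then u i else σ)) {j}
        = if j ∈ T then C T else 0 := by
      intro T
      rw [bFourier_sel]
      by_cases hj : j ∈ T
      · rw [if_pos hj, if_pos hj, hC]
        simp only [ha]
        rw [div_pow]
        ring
      · rw [if_neg hj, if_neg hj, mul_zero]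
    rw [Finset.sum_congr rfl fun T _ => h1 T, ← Finset.sum_filter]
    refine Finset.sum_bij' (fun T _ => T.erase j) (fun S _ => insert j S) ?_ ?_ ?_ ?_ ?_
    · intro T hT
      simp only [Finset.mem_powerset]
      exact Finset.erase_subset_erase j (Finset.subset_univ T)
    · intro S hS
      simp only [Finset.mem_filter, Finset.mem_univ, true_and]
      exact Finset.mem_insert_self j S
    · intro T hT
      simp only [Finset.mem_filter, Finset.mem_univ, true_and] at hT
      exact Finset.insert_erase hT
    · intro S hS
      simp only [Finset.mem_powerset] at hS
      exact Finset.erase_insert (fun hjS => (Finset.mem_erase.1 (hS hjS)).1 rfl)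
    · intro T hT
      simp only [Finset.mem_filter, Finset.mem_univ, true_and] at hT
      rw [Finset.insert_erase hT]
  have hR : (1-|ρ|) * (∑ z : Fin n → Bool,
        (sgnb (z j) / 2 * ∏ k ∈ Finset.univ.erase j, ((1 + ρ * sgnb (z k)) / 2)) * f z)
      = ∑ S ∈ (Finset.univ.erase j).powerset, C (insert j S) := by
    have hz : ∀ z : Fin n → Bool,
        (1-|ρ|) * ((sgnb (z j) / 2 * ∏ k ∈ Finset.univ.erase j, ((1 + ρ * sgnb (z k)) / 2)) * f z)
        = ∑ S ∈ (Finset.univ.erase j).powerset,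
            (a^(S.card+1) * |ρ|^(n-1-S.card)) *
              (if ∀ i, i ∉ insert j S → z i = σ then f z * sgnb (z j) else 0) := by
      intro z
      rw [Finset.prod_congr rfl (fun k _ => h_decomp ρ (z k)), ← hσ, ← ha, Finset.prod_add]
      rw [Finset.mul_sum, Finset.sum_mul, Finset.mul_sum]
      refine Finset.sum_congr rfl fun S hS => ?_
      simp only [Finset.mem_powerset] at hS
      have hcard : (Finset.univ.erase j \ S).card = n - 1 - S.card := by
        rw [Finset.card_sdiff_of_subset hS, Finset.card_erase_of_mem (Finset.mem_univ j)]
        simp [Finset.card_univ]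
      have hprodS : (∏ _k ∈ S, a) = a ^ S.card := Finset.prod_const a
      have hprod2 : (∏ k ∈ Finset.univ.erase j \ S, (|ρ| * (if z k = σ then (1:ℝ) else 0)))
          = |ρ|^(n-1-S.card) * (if ∀ k ∈ Finset.univ.erase j \ S, z k = σ then (1:ℝ) else 0) := by
        rw [Finset.prod_mul_distrib, Finset.prod_const, hcard, Finset.prod_boole]
        simp
      have hiff : (∀ k ∈ Finset.univ.erase j \ S, z k = σ) ↔ (∀ i, i ∉ insert j S → z i = σ) := by
        constructor
        · intro h i hi
          refine h i ?_
          simp only [Finset.mem_sdiff, Finset.mem_erase, Finset.mem_univ, and_true]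
          simp only [Finset.mem_insert, not_or] at hi
          exact ⟨hi.1, hi.2⟩
        · intro h k hk
          simp only [Finset.mem_sdiff, Finset.mem_erase, Finset.mem_univ, and_true] at hk
          exact h k (by simp [Finset.mem_insert, hk.1, hk.2])
      rw [hprodS, hprod2]
      by_cases hcond : ∀ i, i ∉ insert j S → z i = σ
      · rw [if_pos hcond, if_pos (hiff.2 hcond), pow_succ, ha]
        ring
      · rw [if_neg hcond, if_neg (fun h => hcond (hiff.1 h))]
        ring
    rw [Finset.mul_sum, Finset.sum_congr rfl fun z _ => hz z, Finset.sum_comm]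
    refine Finset.sum_congr rfl fun S hS => ?_
    simp only [Finset.mem_powerset] at hS
    have hjS : j ∉ S := fun h => (Finset.mem_erase.1 (hS h)).1 rfl
    have hScard : S.card ≤ n - 1 := by
      have := Finset.card_le_card hS
      simpa [Finset.card_erase_of_mem (Finset.mem_univ j), Finset.card_univ] using this
    have hn : 1 ≤ n := Nat.one_le_iff_ne_zero.2 (by rintro rfl; exact j.elim0)
    rw [hC]
    simp only [Finset.card_insert_of_notMem hjS]
    have hexp : n - (S.card + 1) = n - 1 - S.card := by omega
    rw [hexp, Finset.mul_sum]
  rw [hL, hR]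

lemma levelWeight_one (h : (Fin n → Bool) → ℝ) :
    levelWeight h 1 = ∑ j : Fin n, |bFourier h {j}| := by
  unfold levelWeight
  have : Finset.univ.filter (fun S : Finset (Fin n) => S.card = 1)
      = Finset.univ.image (fun j : Fin n => ({j} : Finset (Fin n))) := by
    ext S
    simp [Finset.card_eq_one, eq_comm]
  rw [this, Finset.sum_image (fun a _ b _ hab => Finset.singleton_injective hab)]

lemma sum_w (ρ : ℝ) (hρ : |ρ| ≤ 1) :
    ∑ T : Finset (Fin n), (1-|ρ|)^T.card * |ρ|^(n-T.card) = 1 := by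
  have := Finset.prod_add (fun _ : Fin n => 1 - |ρ|) (fun _ => |ρ|) Finset.univ
  simp only [Finset.prod_const, Finset.powerset_univ] at this
  have h1 : ∀ T : Finset (Fin n), (Finset.univ \ T).card = n - T.card := by
    intro T
    rw [Finset.card_sdiff_of_subset (Finset.subset_univ T)]
    simp [Finset.card_univ]
  calc ∑ T : Finset (Fin n), (1-|ρ|)^T.card * |ρ|^(n-T.card)
      = ∑ T : Finset (Fin n), (1-|ρ|)^T.card * |ρ|^((Finset.univ \ T).card) := by
        refine Finset.sum_congr rfl fun T _ => ?_; rw [h1]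
    _ = (1 - |ρ| + |ρ|)^n := by rw [← this]; simp [Finset.card_univ]
    _ = 1 := by simp

def Dfun (f : (Fin n → Bool) → ℝ) (ρ : ℝ) : ℝ :=
  ∑ z : Fin n → Bool,
    (∑ j : Fin n, (sgnb (z j) / 2 * ∏ k ∈ Finset.univ.erase j, ((1 + ρ * sgnb (z k)) / 2))) * f z

lemma hasDerivAt_biasedExp (f : (Fin n → Bool) → ℝ) (ρ : ℝ) :
    HasDerivAt (fun x => biasedExp x f) (Dfun f ρ) ρ := by
  unfold biasedExp Dfun
  refine HasDerivAt.fun_sum fun z _ => ?_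
  have hfac : ∀ j : Fin n, HasDerivAt (fun x : ℝ => (1 + x * sgnb (z j)) / 2)
      (sgnb (z j) / 2) ρ := by
    intro j
    have h1 : HasDerivAt (fun x : ℝ => 1 + x * sgnb (z j)) (sgnb (z j)) ρ := by
      simpa using ((hasDerivAt_id ρ).mul_const (sgnb (z j))).const_add 1
    exact h1.div_const 2
  have hp := HasDerivAt.fun_finset_prod (u := Finset.univ)
    (f := fun j (x : ℝ) => (1 + x * sgnb (z j)) / 2)
    (f' := fun j => sgnb (z j) / 2) (fun j _ => hfac j)
  have := hp.mul_const (f z)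
  convert this using 2
  · rfl
  refine Finset.sum_congr rfl fun j _ => ?_
  simp only [smul_eq_mul]
  ring

lemma Dfun_bound (f : (Fin n → Bool) → ℝ) (t : ℝ)
    (hres : ∀ (T : Finset (Fin n)) (w : Fin n → Bool),
      levelWeight (fun u : Fin n → Bool => f (fun i => if i ∈ T then u i else w i)) 1 ≤ t)
    (ρ : ℝ) (hρ : |ρ| < 1) : |Dfun f ρ| ≤ t / (1 - |ρ|) := by
  have hpos : (0:ℝ) < 1 - |ρ| := by linarith
  set σ := decide (ρ < 0) with hσ
  have h1 : (1 - |ρ|) * Dfun f ρ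
      = ∑ T : Finset (Fin n), (1-|ρ|)^T.card * |ρ|^(n-T.card) *
          (∑ j : Fin n, bFourier (fun u : Fin n → Bool =>
            f (fun i => if i ∈ T then u i else σ)) {j}) := by
    unfold Dfun
    rw [Finset.mul_sum]
    calc ∑ z : Fin n → Bool, (1 - |ρ|) *
          ((∑ j : Fin n, (sgnb (z j) / 2 * ∏ k ∈ Finset.univ.erase j,
            ((1 + ρ * sgnb (z k)) / 2))) * f z)
        = ∑ j : Fin n, (1 - |ρ|) * ∑ z : Fin n → Bool,
            (sgnb (z j) / 2 * ∏ k ∈ Finset.univ.erase j,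
              ((1 + ρ * sgnb (z k)) / 2)) * f z := by
          rw [← Finset.mul_sum, ← Finset.mul_sum]
          congr 1
          rw [Finset.sum_comm]
          refine Finset.sum_congr rfl fun z _ => ?_
          rw [Finset.sum_mul]
      _ = ∑ j : Fin n, ∑ T : Finset (Fin n), (1-|ρ|)^T.card * |ρ|^(n-T.card) *
            bFourier (fun u : Fin n → Bool =>
              f (fun i => if i ∈ T then u i else σ)) {j} := by
          refine Finset.sum_congr rfl fun j _ => (key f ρ j).symm
      _ = _ := by
          rw [Finset.sum_comm]
          refine Finset.sum_congr rfl fun T _ => ?_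
          rw [Finset.mul_sum]
  have h2 : |(1 - |ρ|) * Dfun f ρ| ≤ t := by
    rw [h1]
    calc |∑ T : Finset (Fin n), (1-|ρ|)^T.card * |ρ|^(n-T.card) *
          (∑ j : Fin n, bFourier (fun u : Fin n → Bool =>
            f (fun i => if i ∈ T then u i else σ)) {j})|
        ≤ ∑ T : Finset (Fin n), |(1-|ρ|)^T.card * |ρ|^(n-T.card) *
          (∑ j : Fin n, bFourier (fun u : Fin n → Bool =>
            f (fun i => if i ∈ T then u i else σ)) {j})| := Finset.abs_sum_le_sum_abs _ _
      _ ≤ ∑ T : Finset (Fin n), (1-|ρ|)^T.card * |ρ|^(n-T.card) * t := by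
          refine Finset.sum_le_sum fun T _ => ?_
          rw [abs_mul]
          have hw : (0:ℝ) ≤ (1-|ρ|)^T.card * |ρ|^(n-T.card) := by positivity
          rw [abs_of_nonneg hw]
          refine mul_le_mul_of_nonneg_left ?_ hw
          calc |∑ j : Fin n, bFourier (fun u : Fin n → Bool =>
                f (fun i => if i ∈ T then u i else σ)) {j}|
              ≤ ∑ j : Fin n, |bFourier (fun u : Fin n → Bool =>
                f (fun i => if i ∈ T then u i else σ)) {j}| := Finset.abs_sum_le_sum_abs _ _
            _ = levelWeight (fun u : Fin n → Bool =>
                f (fun i => if i ∈ T then u i else σ)) 1 := (levelWeight_one _).symm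
            _ ≤ t := hres T (fun _ => σ)
      _ = t := by rw [← Finset.sum_mul, sum_w ρ hρ.le, one_mul]
  rw [abs_mul, abs_of_pos hpos] at h2
  rw [le_div_iff₀ hpos]
  linarith

lemma continuous_Dfun (f : (Fin n → Bool) → ℝ) : Continuous (Dfun f) := by
  unfold Dfun
  fun_prop

end aux

/-- **The coin problem from level-one Fourier growth of restrictions**
(Agrawal, Lemma 3.2). If `f : {-1,1}^n → [-1,1]` is such that every
restriction of `f` (fixing the coordinates outside a subset `T` to an
assignment `w`) has level-one Fourier weight at most `t`, then for every
`ρ ∈ (-1,1)`, `|E_{z∼μ_ρ}[f(z)] − E_{z∼μ_0}[f(z)]| ≤ ln(1/(1−|ρ|))·t`.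

The restricted function `f_{T,w} : {-1,1}^T → [-1,1]` is represented below by
the function `u ↦ f(if i ∈ T then u i else w i)` on the full cube: this
function depends only on the coordinates in `T`, and its level-one Fourier
weight (computed on the full cube) coincides with `L_{1,1}(f_{T,w})`. -/
theorem coin_problem_from_restrictions (n : ℕ) (f : (Fin n → Bool) → ℝ) (t : ℝ)
    (hf : ∀ z, f z ∈ Set.Icc (-1 : ℝ) 1) (ht : 0 ≤ t)
    (hres : ∀ (T : Finset (Fin n)) (w : Fin n → Bool),
      levelWeight (fun u : Fin n → Bool => f (fun i => if i ∈ T then u i else w i)) 1 ≤ t) :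
    ∀ ρ : ℝ, -1 < ρ → ρ < 1 →
      |biasedExp ρ f - biasedExp 0 f| ≤ Real.log (1 / (1 - |ρ|)) * t := by
  intro ρ hm1 h1
  have hρ : |ρ| < 1 := abs_lt.2 ⟨hm1, h1⟩
  have hpos : (0:ℝ) < 1 - |ρ| := by linarith
  have hd : ∀ s : ℝ, HasDerivAt (fun x => biasedExp x f) (Dfun f s) s :=
    hasDerivAt_biasedExp f
  have hint : IntervalIntegrable (Dfun f) MeasureTheory.volume 0 ρ :=
    (continuous_Dfun f).intervalIntegrable 0 ρ
  have hftc : ∫ s in (0:ℝ)..ρ, Dfun f s = biasedExp ρ f - biasedExp 0 f :=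
    intervalIntegral.integral_eq_sub_of_hasDerivAt (fun x _ => hd x) hint
  rw [← hftc]
  rcases le_or_gt 0 ρ with hsgn | hsgn
  · have habs : |ρ| = ρ := abs_of_nonneg hsgn
    calc |∫ s in (0:ℝ)..ρ, Dfun f s|
        ≤ ∫ s in (0:ℝ)..ρ, |Dfun f s| :=
          intervalIntegral.abs_integral_le_integral_abs hsgn
      _ ≤ ∫ s in (0:ℝ)..ρ, t * (1 - s)⁻¹ := by
          refine intervalIntegral.integral_mono_on hsgn
            ((continuous_Dfun f).abs.intervalIntegrable 0 ρ) ?_ ?_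
          · apply ContinuousOn.intervalIntegrable
            refine continuousOn_const.mul (ContinuousOn.inv₀ (by fun_prop) ?_)
            intro x hx
            rw [Set.uIcc_of_le hsgn, Set.mem_Icc] at hx
            have : x < 1 := lt_of_le_of_lt hx.2 h1
            intro h0
            linarith
          · intro s hs
            rw [Set.mem_Icc] at hs
            have hs1 : |s| < 1 := abs_lt.2 ⟨by linarith, lt_of_le_of_lt hs.2 h1⟩
            have hb := Dfun_bound f t hres s hs1
            rwa [abs_of_nonneg hs.1, div_eq_mul_inv] at hb
      _ = t * ∫ s in (0:ℝ)..ρ, (1 - s)⁻¹ := intervalIntegral.integral_const_mul t _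
      _ = t * Real.log (1 / (1 - ρ)) := by
          rw [intervalIntegral.integral_comp_sub_left (fun x : ℝ => x⁻¹) 1, sub_zero,
            integral_inv]
          rw [Set.uIcc_of_le (by linarith : (1:ℝ) - ρ ≤ 1)]
          rw [Set.mem_Icc]
          push_neg
          intro h0
          rw [habs] at hpos
          linarith
      _ = Real.log (1 / (1 - |ρ|)) * t := by rw [habs, mul_comm]
  · have habs : |ρ| = -ρ := abs_of_neg hsgn
    have hsym : |∫ s in (0:ℝ)..ρ, Dfun f s| = |∫ s in ρ..(0:ℝ), Dfun f s| := by
      rw [intervalIntegral.integral_symm]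
      rw [abs_neg]
    rw [hsym]
    calc |∫ s in ρ..(0:ℝ), Dfun f s|
        ≤ ∫ s in ρ..(0:ℝ), |Dfun f s| :=
          intervalIntegral.abs_integral_le_integral_abs hsgn.le
      _ ≤ ∫ s in ρ..(0:ℝ), t * (s + 1)⁻¹ := by
          refine intervalIntegral.integral_mono_on hsgn.le
            ((continuous_Dfun f).abs.intervalIntegrable ρ 0) ?_ ?_
          · apply ContinuousOn.intervalIntegrable
            refine continuousOn_const.mul (ContinuousOn.inv₀ (by fun_prop) ?_)
            intro x hx
            rw [Set.uIcc_of_le hsgn.le, Set.mem_Icc] at hx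
            have : -1 < x := lt_of_lt_of_le hm1 hx.1
            intro h0
            linarith
          · intro s hs
            rw [Set.mem_Icc] at hs
            have hs1 : |s| < 1 := abs_lt.2 ⟨lt_of_lt_of_le hm1 hs.1, by linarith⟩
            have hb := Dfun_bound f t hres s hs1
            rwa [abs_of_nonpos hs.2, sub_neg_eq_add, add_comm, div_eq_mul_inv] at hb
      _ = t * ∫ s in ρ..(0:ℝ), (s + 1)⁻¹ := intervalIntegral.integral_const_mul t _
      _ = t * Real.log (1 / (ρ + 1)) := by
          rw [intervalIntegral.integral_comp_add_right (fun x : ℝ => x⁻¹) 1, zero_add,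
            integral_inv]
          rw [Set.uIcc_of_le (by linarith : ρ + 1 ≤ 1)]
          rw [Set.mem_Icc]
          push_neg
          intro h0
          linarith
      _ = Real.log (1 / (1 - |ρ|)) * t := by
          rw [habs, mul_comm]
          congr 2
          ring
end
end

section
/- Let A ⊆ ℝ^n be a measurable set with Gaussian measure μ = γ_n(A) > 0. Then Σ_{i=1}^n (∫_A x_i dγ_n(x))² ≤ 2e²·μ²·ln(e/μ). -/
open MeasureTheory ProbabilityTheory Finset Real
open scoped ENNReal NNReal

noncomputable section

/-- Standard Gaussian probability measure on `ℝ^n`. -/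
def gaussianPi (n : ℕ) : Measure (Fin n → ℝ) :=
  Measure.pi fun _ => gaussianReal 0 1


lemma gauss_smul_eq (c : ℝ) (y : ℝ) :
    ((gaussianPDFReal 0 1 y).toNNReal : ℝ) * Real.exp (c * y)
      = ((Real.sqrt (2 * π))⁻¹ * Real.exp (c ^ 2 / 2)) * Real.exp (-(1/2) * (y - c) ^ 2) := by
  rw [Real.coe_toNNReal _ (gaussianPDFReal_nonneg 0 1 y), gaussianPDFReal]
  push_cast
  rw [mul_one, mul_assoc, mul_assoc, ← Real.exp_add, ← Real.exp_add]
  ring_nf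

lemma gauss_density_rw :
    gaussianReal 0 1 = (volume : Measure ℝ).withDensity
      (fun x => ((gaussianPDFReal 0 1 x).toNNReal : ℝ≥0∞)) := by
  rw [gaussianReal_of_var_ne_zero 0 one_ne_zero, gaussianPDF_def]
  congr 1

lemma gauss_exp_integrable (c : ℝ) :
    Integrable (fun y : ℝ => Real.exp (c * y)) (gaussianReal 0 1) := by
  rw [gauss_density_rw,
    integrable_withDensity_iff_integrable_smul ((measurable_gaussianPDFReal 0 1).real_toNNReal)]
  have : (fun y : ℝ => ((gaussianPDFReal 0 1 y).toNNReal : ℝ) • Real.exp (c * y))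
      = fun y => ((Real.sqrt (2 * π))⁻¹ * Real.exp (c ^ 2 / 2)) * Real.exp (-(1/2) * (y - c) ^ 2) := by
    funext y; rw [smul_eq_mul, gauss_smul_eq]
  rw [show (fun x : ℝ => (gaussianPDFReal 0 1 x).toNNReal • rexp (c * x)) = _ from this]
  exact (((integrable_exp_neg_mul_sq (by norm_num : (0:ℝ) < 1/2)).comp_sub_right c).const_mul _)

lemma gauss_exp_integral (c : ℝ) :
    ∫ y, Real.exp (c * y) ∂gaussianReal 0 1 = Real.exp (c ^ 2 / 2) := by
  rw [gauss_density_rw, integral_withDensity_eq_integral_smul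
    ((measurable_gaussianPDFReal 0 1).real_toNNReal)]
  have : (fun y : ℝ => ((gaussianPDFReal 0 1 y).toNNReal : ℝ≥0) • Real.exp (c * y))
      = fun y => ((Real.sqrt (2 * π))⁻¹ * Real.exp (c ^ 2 / 2)) * Real.exp (-(1/2) * (y - c) ^ 2) := by
    funext y
    rw [NNReal.smul_def, smul_eq_mul]
    exact gauss_smul_eq c y
  rw [this, integral_const_mul, integral_sub_right_eq_self (fun y => Real.exp (-(1/2) * y ^ 2)) c,
    integral_gaussian]
  have h2 : π / (1/2 : ℝ) = 2 * π := by ring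
  have h3 : Real.sqrt (2*π) ≠ 0 := by positivity
  rw [h2]
  field_simp

lemma gauss_id_integrable : Integrable (fun y : ℝ => y) (gaussianReal 0 1) := by
  have hg : Integrable (fun y : ℝ => Real.exp (1 * y) + Real.exp ((-1) * y)) (gaussianReal 0 1) :=
    (gauss_exp_integrable 1).add (gauss_exp_integrable (-1))
  refine hg.mono' measurable_id.aestronglyMeasurable ?_
  filter_upwards with y
  rw [Real.norm_eq_abs, one_mul, neg_one_mul]
  rcases abs_cases y with ⟨h, _⟩ | ⟨h, _⟩ <;> rw [h] <;>
  nlinarith [Real.add_one_le_exp y, Real.add_one_le_exp (-y), Real.exp_pos y, Real.exp_pos (-y)]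

lemma pi_gauss_integral_prod {n : ℕ} (f : Fin n → ℝ → ℝ) :
    ∫ x : Fin n → ℝ, ∏ i, f i (x i) ∂(Measure.pi fun _ => gaussianReal 0 1)
      = ∏ i, ∫ y, f i y ∂(gaussianReal 0 1) := by
  letI : MeasureSpace ℝ := ⟨gaussianReal 0 1⟩
  haveI : SigmaFinite (volume : Measure ℝ) :=
    inferInstanceAs (SigmaFinite (gaussianReal 0 1))
  exact MeasureTheory.integral_fintype_prod_eq_prod (fun i => f i)

lemma pi_gauss_integrable_prod {n : ℕ} (f : Fin n → ℝ → ℝ)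
    (hf : ∀ i, Integrable (f i) (gaussianReal 0 1)) :
    Integrable (fun x : Fin n → ℝ => ∏ i, f i (x i))
      (Measure.pi fun _ => gaussianReal 0 1) := by
  letI : MeasureSpace ℝ := ⟨gaussianReal 0 1⟩
  haveI : SigmaFinite (volume : Measure ℝ) :=
    inferInstanceAs (SigmaFinite (gaussianReal 0 1))
  exact MeasureTheory.Integrable.fintype_prod hf

lemma pi_coord_integrable {n : ℕ} (i : Fin n) :
    Integrable (fun x : Fin n → ℝ => x i) (Measure.pi fun _ => gaussianReal 0 1) := by
  have h := pi_gauss_integrable_prod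
    (fun j => if j = i then (fun y : ℝ => y) else (fun _ : ℝ => 1)) ?_
  · have hx : ∀ x : Fin n → ℝ,
        (∏ j, (if j = i then (fun y : ℝ => y) else (fun _ : ℝ => 1)) (x j)) = x i := by
      intro x
      rw [Finset.prod_eq_single i (fun j _ hj => by simp [hj]) (by simp)]
      simp
    simpa only [hx] using h
  · intro j
    by_cases h : j = i
    · simp only [h, if_pos rfl]; exact gauss_id_integrable
    · simp only [if_neg h]; exact integrable_const 1

lemma exp_sum_eq {n : ℕ} (θ : Fin n → ℝ) (t : ℝ) (x : Fin n → ℝ) :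
    Real.exp (t * ∑ i, θ i * x i) = ∏ i, Real.exp ((t * θ i) * x i) := by
  rw [← Real.exp_sum, Finset.mul_sum]
  congr 1
  exact Finset.sum_congr rfl fun i _ => by ring

lemma pi_exp_integrable {n : ℕ} (θ : Fin n → ℝ) (t : ℝ) :
    Integrable (fun x : Fin n → ℝ => Real.exp (t * ∑ i, θ i * x i))
      (Measure.pi fun _ => gaussianReal 0 1) := by
  simp only [exp_sum_eq θ t]
  exact pi_gauss_integrable_prod _ (fun i => gauss_exp_integrable _)

lemma pi_exp_integral {n : ℕ} (θ : Fin n → ℝ) (t : ℝ) :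
    ∫ x : Fin n → ℝ, Real.exp (t * ∑ i, θ i * x i) ∂(Measure.pi fun _ => gaussianReal 0 1)
      = Real.exp ((∑ i, θ i ^ 2) * t ^ 2 / 2) := by
  simp only [exp_sum_eq θ t]
  rw [pi_gauss_integral_prod (fun i y => Real.exp ((t * θ i) * y))]
  simp only [gauss_exp_integral]
  rw [← Real.exp_sum]
  congr 1
  rw [← Finset.sum_div]
  congr 1
  rw [Finset.sum_mul]
  exact Finset.sum_congr rfl fun i _ => by ring

set_option maxHeartbeats 1000000 in
/-- **Gaussian level-one inequality.** If `A ⊆ ℝ^n` is measurable with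
Gaussian measure `μ = γ_n(A) > 0`, then
`∑ᵢ (∫_A xᵢ dγ_n)² ≤ 2e²·μ²·ln(e/μ)`. -/
theorem gaussian_level_one_inequality (n : ℕ) (A : Set (Fin n → ℝ))
    (hA : MeasurableSet A) (hpos : 0 < (gaussianPi n A).toReal) :
    ∑ i : Fin n, (∫ x in A, x i ∂gaussianPi n) ^ 2
      ≤ 2 * Real.exp 1 ^ 2 * (gaussianPi n A).toReal ^ 2 *
        Real.log (Real.exp 1 / (gaussianPi n A).toReal) := by
  unfold gaussianPi at hpos ⊢
  set G : Measure (Fin n → ℝ) := Measure.pi fun _ : Fin n => gaussianReal 0 1 with hG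
  haveI hPG : IsProbabilityMeasure G := by rw [hG]; infer_instance
  set μr := (G A).toReal with hμr
  have hμ1 : μr ≤ 1 := by
    have h := prob_le_one (μ := G) (s := A)
    have := ENNReal.toReal_mono (by simp) h
    simpa using this
  set b : Fin n → ℝ := fun i => ∫ x in A, x i ∂G with hb
  have hgoal : (∑ i : Fin n, (∫ x in A, x i ∂G) ^ 2) = ∑ i, b i ^ 2 := rfl
  rw [hgoal]
  have hlognn : (0:ℝ) ≤ Real.log (Real.exp 1 / μr) := by
    apply Real.log_nonneg
    rw [le_div_iff₀ hpos, one_mul]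
    exact hμ1.trans (by nlinarith [Real.add_one_le_exp 1])
  have hRHSnn : 0 ≤ 2 * Real.exp 1 ^ 2 * μr ^ 2 * Real.log (Real.exp 1 / μr) := by positivity
  set S := Real.sqrt (∑ i, b i ^ 2) with hSdef
  have hsumnn : (0:ℝ) ≤ ∑ i, b i ^ 2 := by positivity
  have hSsq : S ^ 2 = ∑ i, b i ^ 2 := Real.sq_sqrt hsumnn
  by_cases hS0 : S = 0
  · rw [← hSsq, hS0]; simpa using hRHSnn
  have hS : 0 < S := lt_of_le_of_ne (Real.sqrt_nonneg _) (Ne.symm hS0)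
  set θ : Fin n → ℝ := fun i => b i / S with hθ
  have hθ2 : ∑ i, θ i ^ 2 = 1 := by
    simp only [hθ, div_pow]
    rw [← Finset.sum_div, ← hSsq]
    field_simp
  have hbint : ∀ i, Integrable (fun x : Fin n → ℝ => x i) G := fun i => pi_coord_integrable i
  have hXint0 : Integrable (fun x : Fin n → ℝ => ∑ i, θ i * x i) G :=
    integrable_finset_sum _ fun i _ => (hbint i).const_mul (θ i)
  have hkey : ∫ x in A, (∑ i, θ i * x i) ∂G = S := by
    rw [integral_finset_sum _ (fun i _ => ((hbint i).const_mul (θ i)).restrict)]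
    have : ∀ i : Fin n, ∫ x in A, θ i * x i ∂G = θ i * b i := fun i => integral_const_mul _ _
    rw [Finset.sum_congr rfl fun i _ => this i]
    have : ∑ i, θ i * b i = (∑ i, b i ^ 2) / S := by
      rw [Finset.sum_div]
      exact Finset.sum_congr rfl fun i _ => by rw [hθ]; ring
    rw [this, ← hSsq, sq, mul_div_assoc, div_self hS0, mul_one]
  set t := Real.sqrt (2 * Real.log (Real.exp 1 / μr)) with htdef
  have hlog1 : 1 ≤ Real.log (Real.exp 1 / μr) := by
    rw [Real.log_div (Real.exp_ne_zero 1) (ne_of_gt hpos), Real.log_exp]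
    have : Real.log μr ≤ 0 := Real.log_nonpos hpos.le hμ1
    linarith
  have ht2 : t ^ 2 = 2 * Real.log (Real.exp 1 / μr) := Real.sq_sqrt (by linarith)
  have htnn : 0 ≤ t := Real.sqrt_nonneg _
  have ht1 : 1 ≤ t := by nlinarith
  have ht : 0 < t := lt_of_lt_of_le one_pos ht1
  have hpt : ∀ x : Fin n → ℝ,
      (∑ i, θ i * x i) ≤ t + Real.exp (t * (∑ i, θ i * x i) - t ^ 2) / t := by
    intro x
    set u := ∑ i, θ i * x i with hu
    have h1 : t * (u - t) + 1 ≤ Real.exp (t * (u - t)) := Real.add_one_le_exp _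
    have h2 : t * (u - t) = t * u - t ^ 2 := by ring
    rw [← h2]
    rw [← sub_le_iff_le_add', le_div_iff₀ ht]
    nlinarith [Real.exp_pos (t * (u - t))]
  have hexpint : Integrable (fun x : Fin n → ℝ =>
      Real.exp (t * (∑ i, θ i * x i) - t ^ 2)) G := by
    simp only [Real.exp_sub]
    exact (pi_exp_integrable θ t).div_const _
  have step1 : ∫ x in A, (∑ i, θ i * x i) ∂G
      ≤ ∫ x in A, (t + Real.exp (t * (∑ i, θ i * x i) - t ^ 2) / t) ∂G := by
    refine integral_mono hXint0.restrict ?_ hpt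
    exact ((integrable_const t).add (hexpint.div_const t)).restrict
  have step2 : ∫ x in A, (t + Real.exp (t * (∑ i, θ i * x i) - t ^ 2) / t) ∂G
      = t * μr + (∫ x in A, Real.exp (t * (∑ i, θ i * x i) - t ^ 2) ∂G) / t := by
    rw [integral_add ((integrable_const t).restrict) ((hexpint.div_const t).restrict),
      setIntegral_const, integral_div, smul_eq_mul, mul_comm]
    rfl
  have step3 : ∫ x in A, Real.exp (t * (∑ i, θ i * x i) - t ^ 2) ∂G
      ≤ ∫ x, Real.exp (t * (∑ i, θ i * x i) - t ^ 2) ∂G :=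
    setIntegral_le_integral hexpint (Filter.Eventually.of_forall fun x => (Real.exp_pos _).le)
  have step4 : ∫ x, Real.exp (t * (∑ i, θ i * x i) - t ^ 2) ∂G = Real.exp (-t ^ 2 / 2) := by
    simp only [Real.exp_sub]
    rw [integral_div, pi_exp_integral θ t, hθ2, one_mul, ← Real.exp_sub]
    congr 1
    ring
  have hmain : S ≤ t * μr + Real.exp (-t ^ 2 / 2) / t := by
    rw [← hkey]
    have h3 : (∫ x in A, Real.exp (t * (∑ i, θ i * x i) - t ^ 2) ∂G) / t
        ≤ Real.exp (-t ^ 2 / 2) / t := by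
      gcongr
      exact step3.trans step4.le
    linarith [step1, step2.le, h3]
  have hexp' : Real.exp (-t ^ 2 / 2) = μr / Real.exp 1 := by
    rw [ht2]
    have h4 : -(2 * Real.log (Real.exp 1 / μr)) / 2 = -Real.log (Real.exp 1 / μr) := by ring
    rw [h4, Real.exp_neg, Real.exp_log (by positivity), inv_div]
  clear_value G μr b S θ t
  have hfin : S ≤ Real.exp 1 * t * μr := by
    have h6 : (2:ℝ) ≤ Real.exp 1 := by nlinarith [Real.add_one_le_exp 1]
    have h8 : (2:ℝ) ≤ t ^ 2 := by linarith
    have h5 : (μr / Real.exp 1) / t ≤ t * μr := by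
      rw [div_div, div_le_iff₀ (by positivity)]
      have h9 : (1:ℝ) ≤ Real.exp 1 * t ^ 2 := by nlinarith
      nlinarith [mul_nonneg hpos.le (sub_nonneg.mpr h9)]
    calc S ≤ t * μr + (μr / Real.exp 1) / t := by rw [← hexp']; exact hmain
      _ ≤ 2 * (t * μr) := by linarith
      _ ≤ Real.exp 1 * t * μr := by
          nlinarith [mul_nonneg (mul_nonneg (sub_nonneg.mpr h6) htnn) hpos.le]
  have h7 : S ^ 2 ≤ (Real.exp 1 * t * μr) ^ 2 :=
    pow_le_pow_left₀ hS.le hfin 2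
  rw [hSsq] at h7
  calc ∑ i, b i ^ 2 ≤ (Real.exp 1 * t * μr) ^ 2 := h7
    _ = Real.exp 1 ^ 2 * μr ^ 2 * t ^ 2 := by ring
    _ = 2 * Real.exp 1 ^ 2 * μr ^ 2 * Real.log (Real.exp 1 / μr) := by rw [ht2]; ring
end
end

section
/- Let m, n ≥ 1 and let M ∈ ℝ^{m×n²} be a matrix whose rows M₁, …, M_m, viewed as n×n matrices, each have zero diagonal, unit Frobenius norm, and are pairwise orthogonal under the entrywise inner product. For y, z ∈ ℝ^n let y⊗z ∈ ℝ^{n²} denote the vector with entries (y⊗z)_{(i,j)} = y_i z_j. Then: (i) E_{y∼γ_n}[‖M(y⊗y)‖] ≤ √(2m); (ii) E_{y∼γ_n}[sup_{z ∈ ℝ^n, ‖z‖=1} ‖M(z⊗y)‖] ≤ √m, and likewise E_{y∼γ_n}[sup_{z, ‖z‖=1} ‖M(y⊗z)‖] ≤ √m; (iii) sup_{z ∈ ℝ^n, ‖z‖=1} ‖M(z⊗z)‖ ≤ 1. -/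
open MeasureTheory ProbabilityTheory Finset Real

noncomputable section

/-- The Euclidean norm of `M(y ⊗ z) ∈ ℝ^m`, where the `i`-th row of
`M : ℝ^{m×n²}` is the `n×n` matrix `M i` and
`(M(y⊗z))ᵢ = ∑_{a,b} (M i)_{a,b} y_a z_b`. -/
def tensorNorm {m n : ℕ} (M : Fin m → Matrix (Fin n) (Fin n) ℝ)
    (y z : Fin n → ℝ) : ℝ :=
  Real.sqrt (∑ i : Fin m, (∑ a : Fin n, ∑ b : Fin n, M i a b * y a * z b) ^ 2)

namespace OQM

open scoped ENNReal NNReal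

/-! ### One-dimensional Gaussian moments -/

lemma pdf_eq : gaussianPDFReal 0 1 = fun x => (Real.sqrt (2 * π))⁻¹ * Real.exp (-(1/2) * x ^ 2) := by
  ext x
  simp only [gaussianPDFReal, NNReal.coe_one, mul_one, sub_zero]
  ring_nf

lemma integral_gauss (f : ℝ → ℝ) :
    ∫ x, f x ∂(gaussianReal 0 1) = ∫ x, gaussianPDFReal 0 1 x * f x := by
  rw [gaussianReal_of_var_ne_zero 0 one_ne_zero, gaussianPDF_def]
  have h := integral_withDensity_eq_integral_smul (μ := (volume : Measure ℝ))
    (f := fun x => Real.toNNReal (gaussianPDFReal 0 1 x))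
    ((measurable_gaussianPDFReal 0 1).real_toNNReal) f
  rw [show (fun x => ENNReal.ofReal (gaussianPDFReal 0 1 x))
      = (fun x => ((Real.toNNReal (gaussianPDFReal 0 1 x) : ℝ≥0) : ℝ≥0∞)) from rfl, h]
  refine integral_congr_ae (Filter.Eventually.of_forall fun x => ?_)
  simp [NNReal.smul_def, Real.coe_toNNReal _ (gaussianPDFReal_nonneg 0 1 x)]

lemma integrable_gauss_iff (f : ℝ → ℝ) :
    Integrable f (gaussianReal 0 1) ↔
      Integrable (fun x => gaussianPDFReal 0 1 x * f x) volume := by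
  rw [gaussianReal_of_var_ne_zero 0 one_ne_zero, gaussianPDF_def]
  rw [show (fun x => ENNReal.ofReal (gaussianPDFReal 0 1 x))
      = (fun x => ((Real.toNNReal (gaussianPDFReal 0 1 x) : ℝ≥0) : ℝ≥0∞)) from rfl]
  rw [integrable_withDensity_iff_integrable_smul ((measurable_gaussianPDFReal 0 1).real_toNNReal)]
  constructor <;> intro h <;> refine h.congr (Filter.Eventually.of_forall fun x => ?_) <;>
    simp [NNReal.smul_def, Real.coe_toNNReal _ (gaussianPDFReal_nonneg 0 1 x)]

lemma integrable_pow_gauss (k : ℕ) : Integrable (fun x => x ^ k) (gaussianReal 0 1) := by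
  rw [integrable_gauss_iff, pdf_eq]
  have h : Integrable (fun x : ℝ => x ^ (k : ℝ) * Real.exp (-(1/2) * x ^ 2)) volume :=
    integrable_rpow_mul_exp_neg_mul_sq (by norm_num)
      (lt_of_lt_of_le (by norm_num) (Nat.cast_nonneg k))
  simp_rw [Real.rpow_natCast] at h
  refine (h.const_mul ((Real.sqrt (2 * π))⁻¹)).congr
    (Filter.Eventually.of_forall fun x => by ring)

lemma mom_one : ∫ x, x ∂(gaussianReal 0 1) = 0 := by
  rw [integral_gauss]
  have neg : ∀ f : ℝ → ℝ, ∫ x, f (-x) = ∫ x, f x := by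
    intro f
    have A : MeasurableEmbedding (fun x : ℝ => -x) :=
      (Homeomorph.neg ℝ).measurableEmbedding
    calc ∫ x, f (-x) = ∫ x, f x ∂(Measure.map (fun x : ℝ => -x) volume) :=
          (A.integral_map f).symm
      _ = ∫ x, f x := by rw [Measure.map_neg_eq_self]
  have key := neg (fun x => gaussianPDFReal 0 1 x * x)
  simp only [pdf_eq, neg_sq, mul_neg] at key ⊢
  rw [integral_neg] at key
  linarith [key]

lemma mom_two : ∫ x, x ^ 2 ∂(gaussianReal 0 1) = 1 := by
  rw [integral_gauss]
  simp only [pdf_eq]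
  have h1 : ∫ x : ℝ, x ^ 2 * Real.exp (-(1/2) * x ^ 2) = Real.sqrt (2 * π) := by
    have habs : (fun x : ℝ => x ^ 2 * Real.exp (-(1/2) * x ^ 2))
        = fun x : ℝ => |x| ^ 2 * Real.exp (-(1/2) * |x| ^ 2) := by
      funext x; rw [sq_abs]
    rw [habs, integral_comp_abs (f := fun x : ℝ => x ^ 2 * Real.exp (-(1/2) * x ^ 2))]
    have h2 : ∀ x ∈ Set.Ioi (0:ℝ), x ^ 2 * Real.exp (-(1/2) * x ^ 2)
        = x ^ ((2:ℕ):ℝ) * Real.exp (-(1/2) * x ^ ((2:ℕ):ℝ)) := by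
      intro x _; rw [Real.rpow_natCast x 2]
    rw [setIntegral_congr_fun measurableSet_Ioi h2]
    rw [show (((2:ℕ):ℝ)) = (2:ℝ) by norm_num]
    rw [integral_rpow_mul_exp_neg_mul_rpow (by norm_num) (by norm_num) (by norm_num : (0:ℝ) < 1/2)]
    rw [show ((2:ℝ)+1)/2 = 1/2 + 1 by norm_num, Real.Gamma_add_one (by norm_num),
      Real.Gamma_one_half_eq]
    rw [show (-((2:ℝ)+1)/2 : ℝ) = -(3/2 : ℝ) by norm_num]
    rw [show ((1:ℝ)/2) = 2⁻¹ by norm_num, Real.inv_rpow (by norm_num), ← Real.rpow_neg (by norm_num),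
      neg_neg]
    rw [show ((3:ℝ)/2) = 1 + 1/2 by norm_num, Real.rpow_add (by norm_num), Real.rpow_one,
      ← Real.sqrt_eq_rpow, Real.sqrt_mul (by norm_num : (0:ℝ) ≤ 2) π]
    ring
  have h3 : ∀ x : ℝ, (Real.sqrt (2*π))⁻¹ * Real.exp (-(1/2) * x ^ 2) * x ^ 2
      = (Real.sqrt (2*π))⁻¹ * (x ^ 2 * Real.exp (-(1/2) * x ^ 2)) := fun x => by ring
  simp_rw [h3]
  rw [MeasureTheory.integral_const_mul, h1, inv_mul_cancel₀]
  exact Real.sqrt_ne_zero'.mpr (by positivity)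

/-! ### Monomial moments for the product measure -/

def mom (k : ℕ) : ℝ := ∫ x, x ^ k ∂(gaussianReal 0 1)

lemma mom0 : mom 0 = 1 := by simp [mom]
lemma mom1 : mom 1 = 0 := by simpa [mom] using mom_one
lemma mom2 : mom 2 = 1 := by simpa [mom] using mom_two

lemma integral_monomial {n : ℕ} (e : Fin n → ℕ) :
    ∫ y, ∏ j, y j ^ e j ∂(gaussianPi n) = ∏ j, mom (e j) := by
  letI : MeasureSpace ℝ := ⟨gaussianReal 0 1⟩
  haveI : SigmaFinite (volume : Measure ℝ) :=
    (inferInstance : SigmaFinite (gaussianReal 0 1))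
  exact integral_fintype_prod_eq_prod (fun j (x : ℝ) => x ^ e j) (μ := fun _ => gaussianReal 0 1)

lemma integrable_monomial {n : ℕ} (e : Fin n → ℕ) :
    Integrable (fun y => ∏ j, y j ^ e j) (gaussianPi n) := by
  letI : MeasureSpace ℝ := ⟨gaussianReal 0 1⟩
  haveI : SigmaFinite (volume : Measure ℝ) :=
    (inferInstance : SigmaFinite (gaussianReal 0 1))
  exact Integrable.fintype_prod (f := fun j (x : ℝ) => x ^ e j)
    (fun j => integrable_pow_gauss (e j))

def ind {n : ℕ} (a : Fin n) : Fin n → ℕ := fun j => if j = a then 1 else 0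

lemma prod_pow_ind {n : ℕ} (y : Fin n → ℝ) (a : Fin n) :
    ∏ j, y j ^ ind a j = y a := by
  have h : ∀ j : Fin n, y j ^ ind a j = if j = a then y j else 1 := by
    intro j; unfold ind; split <;> simp
  simp only [h]
  simp

lemma mono2_eq {n : ℕ} (b b' : Fin n) :
    (fun y : Fin n → ℝ => y b * y b')
      = fun y => ∏ j, y j ^ (ind b j + ind b' j) := by
  funext y
  simp only [pow_add, Finset.prod_mul_distrib, prod_pow_ind]

lemma mono4_eq {n : ℕ} (a b c d : Fin n) :
    (fun y : Fin n → ℝ => y a * y b * (y c * y d))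
      = fun y => ∏ j, y j ^ (ind a j + ind b j + (ind c j + ind d j)) := by
  funext y
  simp only [pow_add, Finset.prod_mul_distrib, prod_pow_ind]

lemma integrable_mono2 {n : ℕ} (b b' : Fin n) :
    Integrable (fun y : Fin n → ℝ => y b * y b') (gaussianPi n) := by
  rw [mono2_eq]; exact integrable_monomial _

lemma integrable_mono4 {n : ℕ} (a b c d : Fin n) :
    Integrable (fun y : Fin n → ℝ => y a * y b * (y c * y d)) (gaussianPi n) := by
  rw [mono4_eq]; exact integrable_monomial _

lemma integral_xy {n : ℕ} (b b' : Fin n) :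
    ∫ y, y b * y b' ∂(gaussianPi n) = if b = b' then 1 else 0 := by
  rw [mono2_eq, integral_monomial]
  by_cases h : b = b'
  · subst h
    rw [if_pos rfl]
    have : ∀ j : Fin n, mom (ind b j + ind b j) = 1 := by
      intro j; unfold ind; split <;> simp [mom0, mom2]
    simp [this]
  · rw [if_neg h]
    refine Finset.prod_eq_zero (Finset.mem_univ b) ?_
    unfold ind
    rw [if_pos rfl, if_neg h, mom1]

lemma integral_4 {n : ℕ} (a b c d : Fin n) (hab : a ≠ b) (hcd : c ≠ d) :
    ∫ y, y a * y b * (y c * y d) ∂(gaussianPi n)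
      = (if a = c ∧ b = d then (1:ℝ) else 0) + (if a = d ∧ b = c then 1 else 0) := by
  rw [mono4_eq, integral_monomial]
  by_cases hac : a = c
  · by_cases hbd : b = d
    · subst hac; subst hbd
      rw [if_pos ⟨rfl, rfl⟩, if_neg (by rintro ⟨h1, -⟩; exact hcd h1)]
      have : ∀ j : Fin n, mom (ind a j + ind b j + (ind a j + ind b j)) = 1 := by
        intro j; unfold ind
        by_cases h1 : j = a <;> by_cases h2 : j = b <;> simp_all [mom0, mom2]
      simp [this]
    · rw [if_neg (by rintro ⟨-, h2⟩; exact hbd h2),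
        if_neg (by rintro ⟨h1, -⟩; exact hcd (hac.symm.trans h1))]
      refine (Finset.prod_eq_zero (Finset.mem_univ b) ?_).trans (by norm_num)
      unfold ind
      rw [if_neg (fun h => hab h.symm), if_pos rfl,
        if_neg (fun h => hab (hac.trans h.symm)), if_neg hbd, mom1]
  · by_cases had : a = d
    · by_cases hbc : b = c
      · subst had; subst hbc
        rw [if_neg (by rintro ⟨h1, -⟩; exact hac h1), if_pos ⟨rfl, rfl⟩]
        have : ∀ j : Fin n, mom (ind a j + ind b j + (ind b j + ind a j)) = 1 := by
          intro j; unfold ind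
          by_cases h1 : j = a <;> by_cases h2 : j = b <;> simp_all [mom0, mom2]
        simp [this]
      · rw [if_neg (by rintro ⟨h1, -⟩; exact hac h1),
          if_neg (by rintro ⟨-, h2⟩; exact hbc h2)]
        refine (Finset.prod_eq_zero (Finset.mem_univ b) ?_).trans (by norm_num)
        unfold ind
        rw [if_neg (fun h => hab h.symm), if_pos rfl, if_neg hbc,
          if_neg (fun h => hab (h.trans had.symm).symm), mom1]
    · rw [if_neg (by rintro ⟨h1, -⟩; exact hac h1),
        if_neg (by rintro ⟨h1, -⟩; exact had h1)]
      refine (Finset.prod_eq_zero (Finset.mem_univ a) ?_).trans (by norm_num)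
      unfold ind
      rw [if_pos rfl, if_neg hab, if_neg hac, if_neg had, mom1]

/-! ### Expansion of the relevant quadratic forms -/

lemma sq_linear_expand {n : ℕ} (w : Fin n → ℝ) (y : Fin n → ℝ) :
    (∑ b, w b * y b) ^ 2 = ∑ b, ∑ b', (w b * w b') * (y b * y b') := by
  rw [pow_two, Finset.sum_mul_sum]
  exact Finset.sum_congr rfl fun b _ => Finset.sum_congr rfl fun b' _ => by ring

lemma integrable_sq_linear {n : ℕ} (w : Fin n → ℝ) :
    Integrable (fun y : Fin n → ℝ => (∑ b, w b * y b) ^ 2) (gaussianPi n) := by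
  simp_rw [sq_linear_expand]
  exact integrable_finset_sum _ fun b _ => integrable_finset_sum _ fun b' _ =>
    (integrable_mono2 b b').const_mul _

lemma integral_sq_linear {n : ℕ} (w : Fin n → ℝ) :
    ∫ y, (∑ b, w b * y b) ^ 2 ∂(gaussianPi n) = ∑ b, w b * w b := by
  simp_rw [sq_linear_expand]
  rw [integral_finset_sum _ fun b _ => integrable_finset_sum _ fun b' _ =>
    (integrable_mono2 b b').const_mul _]
  have h : ∀ b : Fin n, ∫ y, ∑ b', (w b * w b') * (y b * y b') ∂(gaussianPi n)
      = ∑ b', (w b * w b') * (if b = b' then 1 else 0) := by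
    intro b
    rw [integral_finset_sum _ fun b' _ => (integrable_mono2 b b').const_mul _]
    exact Finset.sum_congr rfl fun b' _ => by
      rw [MeasureTheory.integral_const_mul, integral_xy]
  simp_rw [h, mul_ite, mul_one, mul_zero, Finset.sum_ite_eq, Finset.mem_univ, if_true]

lemma quad_expand {n : ℕ} (A : Matrix (Fin n) (Fin n) ℝ) (y : Fin n → ℝ) :
    (∑ a, ∑ b, A a b * y a * y b) ^ 2
      = ∑ p : Fin n × Fin n, ∑ q : Fin n × Fin n,
          (A p.1 p.2 * A q.1 q.2) * (y p.1 * y p.2 * (y q.1 * y q.2)) := by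
  have flat : ∑ p : Fin n × Fin n, A p.1 p.2 * y p.1 * y p.2
      = ∑ a, ∑ b, A a b * y a * y b := Fintype.sum_prod_type _
  rw [← flat, pow_two, Finset.sum_mul_sum]
  exact Finset.sum_congr rfl fun p _ => Finset.sum_congr rfl fun q _ => by ring

lemma integrable_quad {n : ℕ} (A : Matrix (Fin n) (Fin n) ℝ) :
    Integrable (fun y : Fin n → ℝ => (∑ a, ∑ b, A a b * y a * y b) ^ 2) (gaussianPi n) := by
  simp_rw [quad_expand]
  exact integrable_finset_sum _ fun p _ => integrable_finset_sum _ fun q _ =>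
    (integrable_mono4 _ _ _ _).const_mul _

lemma quad_moment {n : ℕ} (A : Matrix (Fin n) (Fin n) ℝ) (hA : ∀ a, A a a = 0) :
    ∫ y, (∑ a, ∑ b, A a b * y a * y b) ^ 2 ∂(gaussianPi n)
      = (∑ a, ∑ b, A a b * A a b) + ∑ a, ∑ b, A a b * A b a := by
  simp_rw [quad_expand]
  rw [integral_finset_sum _ fun p _ => integrable_finset_sum _ fun q _ =>
    (integrable_mono4 _ _ _ _).const_mul _]
  have h : ∀ p : Fin n × Fin n, ∫ y, ∑ q : Fin n × Fin n,
        (A p.1 p.2 * A q.1 q.2) * (y p.1 * y p.2 * (y q.1 * y q.2)) ∂(gaussianPi n)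
      = ∑ q : Fin n × Fin n, (A p.1 p.2 * A q.1 q.2) *
          ((if q = p then (1:ℝ) else 0) + (if q = (p.2, p.1) then 1 else 0)) := by
    intro p
    rw [integral_finset_sum _ fun q _ => (integrable_mono4 _ _ _ _).const_mul _]
    refine Finset.sum_congr rfl fun q _ => ?_
    rw [MeasureTheory.integral_const_mul]
    by_cases hp : p.1 = p.2
    · have hz : A p.1 p.2 = 0 := by rw [hp]; exact hA p.2
      simp [hz]
    · by_cases hq : q.1 = q.2
      · have hz : A q.1 q.2 = 0 := by rw [hq]; exact hA q.2
        simp [hz]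
      · rw [integral_4 _ _ _ _ hp hq]
        congr 2
        · by_cases h1 : q = p
          · subst h1; simp
          · rw [if_neg (fun hc => h1 (Prod.ext hc.1.symm hc.2.symm)), if_neg h1]
        · by_cases h2 : q = (p.2, p.1)
          · subst h2; simp
          · rw [if_neg (fun hc => h2 (Prod.ext hc.2.symm hc.1.symm)), if_neg h2]
  simp_rw [h, mul_add]
  simp only [Finset.sum_add_distrib]
  congr 1
  · have e1 : ∀ p : Fin n × Fin n, (∑ q : Fin n × Fin n,
        (A p.1 p.2 * A q.1 q.2) * (if q = p then (1:ℝ) else 0)) = A p.1 p.2 * A p.1 p.2 := by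
      intro p
      simp [mul_ite, mul_one, mul_zero, Finset.sum_ite_eq']
    simp_rw [e1]
    exact Fintype.sum_prod_type _
  · have e2 : ∀ p : Fin n × Fin n, (∑ q : Fin n × Fin n,
        (A p.1 p.2 * A q.1 q.2) * (if q = (p.2, p.1) then (1:ℝ) else 0))
          = A p.1 p.2 * A p.2 p.1 := by
      intro p
      simp [mul_ite, mul_one, mul_zero, Finset.sum_ite_eq']
    simp_rw [e2]
    exact Fintype.sum_prod_type _

/-! ### Bessel inequality -/

lemma swap3 {m n : ℕ} (g : Fin m → Fin n → Fin n → ℝ) :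
    ∑ a, ∑ b, ∑ i, g i a b = ∑ i, ∑ a, ∑ b, g i a b :=
  calc ∑ a, ∑ b, ∑ i, g i a b = ∑ a, ∑ i, ∑ b, g i a b :=
        Finset.sum_congr rfl fun _ _ => Finset.sum_comm
    _ = ∑ i, ∑ a, ∑ b, g i a b := Finset.sum_comm

lemma bessel {m n : ℕ} (M : Fin m → Matrix (Fin n) (Fin n) ℝ)
    (hunit : ∀ i, ∑ a : Fin n, ∑ b : Fin n, M i a b * M i a b = 1)
    (horth : ∀ i j, i ≠ j → ∑ a : Fin n, ∑ b : Fin n, M i a b * M j a b = 0)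
    (W : Matrix (Fin n) (Fin n) ℝ) :
    ∑ i, (∑ a, ∑ b, M i a b * W a b) ^ 2 ≤ ∑ a, ∑ b, W a b * W a b := by
  set c : Fin m → ℝ := fun i => ∑ a, ∑ b, M i a b * W a b with hc
  have cross : ∑ a, ∑ b, W a b * (∑ i, c i * M i a b) = ∑ i, c i * c i := by
    have h1 : ∀ a b, W a b * (∑ i, c i * M i a b) = ∑ i, c i * (M i a b * W a b) := by
      intro a b; rw [Finset.mul_sum]; exact Finset.sum_congr rfl fun i _ => by ring
    simp_rw [h1]
    rw [swap3]
    exact Finset.sum_congr rfl fun i _ => by simp_rw [← Finset.mul_sum]; rfl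
  have sqterm : ∑ a, ∑ b, (∑ i, c i * M i a b) * (∑ j, c j * M j a b) = ∑ i, c i * c i := by
    have h1 : ∀ a b, (∑ i, c i * M i a b) * (∑ j, c j * M j a b)
        = ∑ i, ∑ j, c i * c j * (M i a b * M j a b) := by
      intro a b; rw [Finset.sum_mul_sum]
      exact Finset.sum_congr rfl fun i _ => Finset.sum_congr rfl fun j _ => by ring
    simp_rw [h1]
    rw [swap3 (g := fun i a b => ∑ j, c i * c j * (M i a b * M j a b))]
    refine Finset.sum_congr rfl fun i _ => ?_
    rw [swap3 (g := fun j a b => c i * c j * (M i a b * M j a b))]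
    have h2 : ∀ j, ∑ a, ∑ b, c i * c j * (M i a b * M j a b)
        = c i * c j * ∑ a, ∑ b, M i a b * M j a b := by
      intro j; simp_rw [Finset.mul_sum]
    simp_rw [h2]
    rw [Finset.sum_eq_single i]
    · rw [hunit i, mul_one]
    · intro j _ hji; rw [horth i j (Ne.symm hji), mul_zero]
    · intro h; exact absurd (Finset.mem_univ i) h
  have key : 0 ≤ ∑ a, ∑ b, (W a b - ∑ i, c i * M i a b)^2 :=
    Finset.sum_nonneg fun a _ => Finset.sum_nonneg fun b _ => sq_nonneg _
  have expand2 : ∑ a, ∑ b, (W a b - ∑ i, c i * M i a b)^2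
      = (∑ a, ∑ b, W a b * W a b) - 2 * (∑ a, ∑ b, W a b * (∑ i, c i * M i a b))
        + ∑ a, ∑ b, (∑ i, c i * M i a b) * (∑ j, c j * M j a b) := by
    have L1 : ∀ (X Y Z : Fin n → Fin n → ℝ),
        ∑ a, ∑ b, (X a b - 2 * Y a b + Z a b)
          = (∑ a, ∑ b, X a b) - 2 * (∑ a, ∑ b, Y a b) + ∑ a, ∑ b, Z a b := by
      intro X Y Z
      simp only [Finset.sum_add_distrib, Finset.sum_sub_distrib, ← Finset.mul_sum]
    calc ∑ a, ∑ b, (W a b - ∑ i, c i * M i a b)^2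
        = ∑ a, ∑ b, (W a b * W a b - 2 * (W a b * (∑ i, c i * M i a b))
            + (∑ i, c i * M i a b) * (∑ j, c j * M j a b)) :=
          Finset.sum_congr rfl fun a _ => Finset.sum_congr rfl fun b _ => by ring
      _ = _ := L1 _ _ _
  have hsq : ∀ i : Fin m, c i ^ 2 = c i * c i := fun i => pow_two (c i)
  show ∑ i, c i ^ 2 ≤ ∑ a, ∑ b, W a b * W a b
  simp_rw [hsq]
  rw [expand2, cross, sqterm] at key
  linarith

/-! ### Integral comparison via AM-GM -/

lemma integral_le_sqrt_of_le {X : Type*} [MeasurableSpace X] (μ : Measure X)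
    [IsProbabilityMeasure μ] (f h : X → ℝ) (c : ℝ) (hc : 0 < c)
    (hf0 : ∀ x, 0 ≤ f x) (hh0 : ∀ x, 0 ≤ h x)
    (hfh : ∀ x, f x ≤ Real.sqrt (h x)) (hInt : Integrable h μ)
    (hhc : ∫ x, h x ∂μ ≤ c) : ∫ x, f x ∂μ ≤ Real.sqrt c := by
  have hbound : ∀ x, f x ≤ (h x + c) / (2 * Real.sqrt c) := by
    intro x
    refine (hfh x).trans ?_
    have h2 : 0 < Real.sqrt c := Real.sqrt_pos.mpr hc
    have h3 : Real.sqrt (h x) ^ 2 = h x := Real.sq_sqrt (hh0 x)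
    have h4 : Real.sqrt c ^ 2 = c := Real.sq_sqrt hc.le
    rw [le_div_iff₀ (by positivity)]
    nlinarith [sq_nonneg (Real.sqrt (h x) - Real.sqrt c)]
  have hintg : Integrable (fun x => (h x + c) / (2 * Real.sqrt c)) μ :=
    ((hInt.add (integrable_const c)).div_const _)
  have hmono := integral_mono_of_nonneg (Filter.Eventually.of_forall hf0) hintg
    (Filter.Eventually.of_forall hbound)
  refine hmono.trans ?_
  rw [integral_div, integral_add hInt (integrable_const c), integral_const]
  simp only [measure_univ, probReal_univ, smul_eq_mul, one_mul]
  have h2 : 0 < Real.sqrt c := Real.sqrt_pos.mpr hc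
  rw [div_le_iff₀ (by positivity)]
  have h4 : Real.sqrt c * Real.sqrt c = c := Real.mul_self_sqrt hc.le
  nlinarith

end OQM

open OQM in
/-- **Moment bounds for orthonormal families of quadratic forms.**
Let the rows `M₁, …, M_m` of `M ∈ ℝ^{m×n²}`, viewed as `n×n` matrices, have
zero diagonal, unit Frobenius norm and be pairwise orthogonal. Then
(i) `E_{y∼γ_n} ‖M(y⊗y)‖ ≤ √(2m)`;
(ii) `E_{y∼γ_n} sup_{‖z‖=1} ‖M(z⊗y)‖ ≤ √m` and
     `E_{y∼γ_n} sup_{‖z‖=1} ‖M(y⊗z)‖ ≤ √m`;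
(iii) `sup_{‖z‖=1} ‖M(z⊗z)‖ ≤ 1`. -/
theorem orthonormal_quadratic_moments (m n : ℕ) (hm : 1 ≤ m) (hn : 1 ≤ n)
    (M : Fin m → Matrix (Fin n) (Fin n) ℝ)
    (hdiag : ∀ i a, M i a a = 0)
    (hunit : ∀ i, ∑ a : Fin n, ∑ b : Fin n, M i a b * M i a b = 1)
    (horth : ∀ i j, i ≠ j → ∑ a : Fin n, ∑ b : Fin n, M i a b * M j a b = 0) :
    (∫ y, tensorNorm M y y ∂gaussianPi n ≤ Real.sqrt (2 * m)) ∧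
    (∫ y, sSup {v : ℝ | ∃ z : Fin n → ℝ, (∑ j, z j ^ 2) = 1 ∧ v = tensorNorm M z y}
        ∂gaussianPi n ≤ Real.sqrt m) ∧
    (∫ y, sSup {v : ℝ | ∃ z : Fin n → ℝ, (∑ j, z j ^ 2) = 1 ∧ v = tensorNorm M y z}
        ∂gaussianPi n ≤ Real.sqrt m) ∧
    sSup {v : ℝ | ∃ z : Fin n → ℝ, (∑ j, z j ^ 2) = 1 ∧ v = tensorNorm M z z} ≤ 1 := by
  haveI : IsProbabilityMeasure (gaussianPi n) := by unfold gaussianPi; infer_instance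
  have hm1 : (1:ℝ) ≤ (m:ℝ) := by exact_mod_cast hm
  -- the distinguished unit vector
  set z₀ : Fin n → ℝ := fun j => if j = (⟨0, hn⟩ : Fin n) then 1 else 0 with hz₀
  have hz₀sum : (∑ j, z₀ j ^ 2) = 1 := by
    have h : ∀ j : Fin n, z₀ j ^ 2 = if j = (⟨0, hn⟩ : Fin n) then 1 else 0 := by
      intro j; rw [hz₀]; dsimp only; split <;> norm_num
    simp [h]
  refine ⟨?_, ?_, ?_, ?_⟩
  · -- part (i)
    set H : (Fin n → ℝ) → ℝ := fun y => ∑ i, (∑ a, ∑ b, M i a b * y a * y b) ^ 2 with hH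
    have hInt : Integrable H (gaussianPi n) :=
      integrable_finset_sum _ fun i _ => integrable_quad (M i)
    have hval : ∫ y, H y ∂(gaussianPi n)
        = ∑ i, ((1:ℝ) + ∑ a, ∑ b, M i a b * M i b a) := by
      rw [integral_finset_sum _ fun i _ => integrable_quad (M i)]
      exact Finset.sum_congr rfl fun i _ => by rw [quad_moment (M i) (hdiag i), hunit i]
    have hswap : ∀ i, ∑ a, ∑ b, M i b a * M i b a = 1 := by
      intro i; rw [Finset.sum_comm]; exact hunit i
    have hoff : ∀ i, ∑ a, ∑ b, M i a b * M i b a ≤ 1 := by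
      intro i
      have step : ∑ a, ∑ b, M i a b * M i b a
          ≤ ∑ a, ∑ b, (M i a b * M i a b + M i b a * M i b a) / 2 :=
        Finset.sum_le_sum fun a _ => Finset.sum_le_sum fun b _ => by
          nlinarith [sq_nonneg (M i a b - M i b a)]
      refine step.trans ?_
      have e : ∑ a, ∑ b, (M i a b * M i a b + M i b a * M i b a) / 2
          = ((∑ a, ∑ b, M i a b * M i a b) + ∑ a, ∑ b, M i b a * M i b a) / 2 := by
        simp only [add_div, Finset.sum_add_distrib, ← Finset.sum_div]
      rw [e, hunit i, hswap i]
      norm_num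
    have hhc : ∫ y, H y ∂(gaussianPi n) ≤ 2 * m := by
      rw [hval]
      calc ∑ i, ((1:ℝ) + ∑ a, ∑ b, M i a b * M i b a) ≤ ∑ _i : Fin m, (2:ℝ) :=
            Finset.sum_le_sum fun i _ => by linarith [hoff i]
        _ = 2 * m := by simp [Finset.sum_const, mul_comm]
    refine integral_le_sqrt_of_le (gaussianPi n) (fun y => tensorNorm M y y) H (2 * m)
      (by linarith) (fun y => Real.sqrt_nonneg _)
      (fun y => Finset.sum_nonneg fun i _ => sq_nonneg _)
      (fun y => le_of_eq rfl) hInt hhc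
  · -- part (ii), first form
    set H : (Fin n → ℝ) → ℝ := fun y => ∑ i, ∑ a, (∑ b, M i a b * y b) ^ 2 with hH
    have hInt : Integrable H (gaussianPi n) :=
      integrable_finset_sum _ fun i _ => integrable_finset_sum _ fun a _ => integrable_sq_linear _
    have hval : ∫ y, H y ∂(gaussianPi n) = m := by
      simp only [hH]
      rw [integral_finset_sum _ fun i _ =>
        integrable_finset_sum _ fun a _ => integrable_sq_linear (fun b => M i a b)]
      have h1 : ∀ i : Fin m, ∫ y, ∑ a, (∑ b, M i a b * y b) ^ 2 ∂(gaussianPi n) = 1 := by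
        intro i
        rw [integral_finset_sum _ fun a _ => integrable_sq_linear (fun b => M i a b)]
        rw [show (∑ a, ∫ y, (∑ b, M i a b * y b) ^ 2 ∂(gaussianPi n))
            = ∑ a, ∑ b, M i a b * M i a b from
          Finset.sum_congr rfl fun a _ => integral_sq_linear (fun b => M i a b)]
        exact hunit i
      simp [h1]
    have hbd : ∀ y : Fin n → ℝ, ∀ v ∈ {v : ℝ | ∃ z : Fin n → ℝ,
        (∑ j, z j ^ 2) = 1 ∧ v = tensorNorm M z y}, v ≤ Real.sqrt (H y) := by
      rintro y v ⟨z, hz, rfl⟩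
      rw [tensorNorm]
      refine Real.sqrt_le_sqrt (Finset.sum_le_sum fun i _ => ?_)
      have hre : ∑ a, ∑ b, M i a b * z a * y b = ∑ a, z a * (∑ b, M i a b * y b) := by
        refine Finset.sum_congr rfl fun a _ => ?_
        rw [Finset.mul_sum]; exact Finset.sum_congr rfl fun b _ => by ring
      rw [hre]
      calc (∑ a, z a * (∑ b, M i a b * y b)) ^ 2
          ≤ (∑ a, z a ^ 2) * ∑ a, (∑ b, M i a b * y b) ^ 2 :=
            Finset.sum_mul_sq_le_sq_mul_sq _ _ _
        _ = ∑ a, (∑ b, M i a b * y b) ^ 2 := by rw [hz, one_mul]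
    have hnn : ∀ y : Fin n → ℝ, 0 ≤ sSup {v : ℝ | ∃ z : Fin n → ℝ,
        (∑ j, z j ^ 2) = 1 ∧ v = tensorNorm M z y} := by
      intro y
      have hmem : tensorNorm M z₀ y ∈ {v : ℝ | ∃ z : Fin n → ℝ,
          (∑ j, z j ^ 2) = 1 ∧ v = tensorNorm M z y} := ⟨z₀, hz₀sum, rfl⟩
      have hbdd : BddAbove {v : ℝ | ∃ z : Fin n → ℝ,
          (∑ j, z j ^ 2) = 1 ∧ v = tensorNorm M z y} := ⟨Real.sqrt (H y), fun v hv => hbd y v hv⟩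
      exact le_trans (Real.sqrt_nonneg _) (le_csSup hbdd hmem)
    exact integral_le_sqrt_of_le (gaussianPi n) _ H m (by linarith) hnn
      (fun y => Finset.sum_nonneg fun i _ => Finset.sum_nonneg fun a _ => sq_nonneg _)
      (fun y => Real.sSup_le (hbd y) (Real.sqrt_nonneg _)) hInt (le_of_eq hval)
  · -- part (ii), second form
    set H : (Fin n → ℝ) → ℝ := fun y => ∑ i, ∑ b, (∑ a, M i a b * y a) ^ 2 with hH
    have hInt : Integrable H (gaussianPi n) :=
      integrable_finset_sum _ fun i _ => integrable_finset_sum _ fun b _ =>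
        integrable_sq_linear (fun a => M i a b)
    have hval : ∫ y, H y ∂(gaussianPi n) = m := by
      simp only [hH]
      rw [integral_finset_sum _ fun i _ => integrable_finset_sum _ fun b _ =>
        integrable_sq_linear (fun a => M i a b)]
      have h1 : ∀ i : Fin m, ∫ y, ∑ b, (∑ a, M i a b * y a) ^ 2 ∂(gaussianPi n) = 1 := by
        intro i
        rw [integral_finset_sum _ fun b _ => integrable_sq_linear (fun a => M i a b)]
        rw [show (∑ b, ∫ y, (∑ a, M i a b * y a) ^ 2 ∂(gaussianPi n))
            = ∑ b, ∑ a, M i a b * M i a b from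
          Finset.sum_congr rfl fun b _ => integral_sq_linear (fun a => M i a b)]
        rw [Finset.sum_comm]; exact hunit i
      simp [h1]
    have hbd : ∀ y : Fin n → ℝ, ∀ v ∈ {v : ℝ | ∃ z : Fin n → ℝ,
        (∑ j, z j ^ 2) = 1 ∧ v = tensorNorm M y z}, v ≤ Real.sqrt (H y) := by
      rintro y v ⟨z, hz, rfl⟩
      rw [tensorNorm]
      refine Real.sqrt_le_sqrt (Finset.sum_le_sum fun i _ => ?_)
      have hre : ∑ a, ∑ b, M i a b * y a * z b = ∑ b, z b * (∑ a, M i a b * y a) := by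
        rw [Finset.sum_comm]
        refine Finset.sum_congr rfl fun b _ => ?_
        rw [Finset.mul_sum]; exact Finset.sum_congr rfl fun a _ => by ring
      rw [hre]
      calc (∑ b, z b * (∑ a, M i a b * y a)) ^ 2
          ≤ (∑ b, z b ^ 2) * ∑ b, (∑ a, M i a b * y a) ^ 2 :=
            Finset.sum_mul_sq_le_sq_mul_sq _ _ _
        _ = ∑ b, (∑ a, M i a b * y a) ^ 2 := by rw [hz, one_mul]
    have hnn : ∀ y : Fin n → ℝ, 0 ≤ sSup {v : ℝ | ∃ z : Fin n → ℝ,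
        (∑ j, z j ^ 2) = 1 ∧ v = tensorNorm M y z} := by
      intro y
      have hmem : tensorNorm M y z₀ ∈ {v : ℝ | ∃ z : Fin n → ℝ,
          (∑ j, z j ^ 2) = 1 ∧ v = tensorNorm M y z} := ⟨z₀, hz₀sum, rfl⟩
      have hbdd : BddAbove {v : ℝ | ∃ z : Fin n → ℝ,
          (∑ j, z j ^ 2) = 1 ∧ v = tensorNorm M y z} := ⟨Real.sqrt (H y), fun v hv => hbd y v hv⟩
      exact le_trans (Real.sqrt_nonneg _) (le_csSup hbdd hmem)
    exact integral_le_sqrt_of_le (gaussianPi n) _ H m (by linarith) hnn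
      (fun y => Finset.sum_nonneg fun i _ => Finset.sum_nonneg fun b _ => sq_nonneg _)
      (fun y => Real.sSup_le (hbd y) (Real.sqrt_nonneg _)) hInt (le_of_eq hval)
  · -- part (iii)
    refine Real.sSup_le ?_ zero_le_one
    rintro v ⟨z, hz, rfl⟩
    rw [tensorNorm]
    have hre : ∀ i : Fin m, ∑ a, ∑ b, M i a b * z a * z b
        = ∑ a, ∑ b, M i a b * (z a * z b) :=
      fun i => Finset.sum_congr rfl fun a _ => Finset.sum_congr rfl fun b _ => by ring
    simp_rw [hre]
    have hb := bessel M hunit horth (fun a b => z a * z b)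
    have h2 : ∑ a, ∑ b, (z a * z b) * (z a * z b) = 1 := by
      have h3 : ∀ (a b : Fin n), (z a * z b) * (z a * z b) = z a ^ 2 * z b ^ 2 :=
        fun a b => by ring
      simp_rw [h3, ← Finset.mul_sum, hz, mul_one]
      exact hz
    calc Real.sqrt (∑ i, (∑ a, ∑ b, M i a b * (z a * z b)) ^ 2)
        ≤ Real.sqrt 1 := Real.sqrt_le_sqrt (by rw [← h2]; exact hb)
      _ = 1 := Real.sqrt_one
end
end

section
/- Let g : {−1,1}^{m₁} × {−1,1}^{m₂} → {−1,1} be a balanced gadget and let C : ({−1,1}^{m₁})^n × ({−1,1}^{m₂})^n → ℝ be any function, with g-fiber C_{↓g}. For tuples S^{[n]} = (S₁,…,S_n) with each Sᵢ ⊆ [m₁], and T^{[n]} = (T₁,…,T_n) with each Tᵢ ⊆ [m₂], define Ĉ(S^{[n]},T^{[n]}) = E_{x,y}[C(x,y)·Π_{i∈[n]} x_{i,Sᵢ}·Π_{j∈[n]} y_{j,Tⱼ}] over independent uniform x,y, where x_{i,S} = Π_{j∈S} x_{i,j}. Then for every I ⊆ [n], the Fourier coefficient of the fiber satisfies Ĉ_{↓g}(I)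 = Σ Ĉ(S^I, T^I)·Π_{i∈I} ĝ(Sᵢ, Tᵢ), where the sum runs over all choices of nonempty Sᵢ ⊆ [m₁] and nonempty Tᵢ ⊆ [m₂] for i ∈ I, and S^I (resp. T^I) denotes the tuple with Sⱼ = ∅ (resp. Tⱼ = ∅) for all j ∉ I. -/
open MeasureTheory ProbabilityTheory Finset Real

noncomputable section

/-- Two-party Fourier coefficient of a gadget `g : {-1,1}^{m₁} × {-1,1}^{m₂} → {-1,1}`:
`ĝ(S,T) = E_{x,y}[g(x,y)·x_S·y_T]`. -/
def gFourier {m₁ m₂ : ℕ} (g : (Fin m₁ → Bool) → (Fin m₂ → Bool) → Bool)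
    (S : Finset (Fin m₁)) (T : Finset (Fin m₂)) : ℝ :=
  ((2 : ℝ) ^ m₁ * (2 : ℝ) ^ m₂)⁻¹ *
    ∑ x : Fin m₁ → Bool, ∑ y : Fin m₂ → Bool,
      sgnb (g x y) * (∏ i ∈ S, sgnb (x i)) * ∏ j ∈ T, sgnb (y j)

/-- A gadget is balanced if `ĝ(S,T) = 0` whenever `S = ∅` or `T = ∅`. -/
def BalancedGadget {m₁ m₂ : ℕ} (g : (Fin m₁ → Bool) → (Fin m₂ → Bool) → Bool) : Prop :=
  ∀ S T, (S = ∅ ∨ T = ∅) → gFourier g S T = 0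

/-- `g`-fiber of `C : ({-1,1}^{m₁})^n × ({-1,1}^{m₂})^n → ℝ`:
`C_{↓g}(z) = E[C(x,y) ∣ g(xᵢ,yᵢ) = zᵢ ∀i]`, the conditional expectation over
independent uniform `x, y`. -/
def gFiber {n m₁ m₂ : ℕ} (g : (Fin m₁ → Bool) → (Fin m₂ → Bool) → Bool)
    (C : (Fin n → Fin m₁ → Bool) → (Fin n → Fin m₂ → Bool) → ℝ)
    (z : Fin n → Bool) : ℝ :=
  (∑ x : Fin n → Fin m₁ → Bool, ∑ y : Fin n → Fin m₂ → Bool,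
      if ∀ i, g (x i) (y i) = z i then C x y else 0) /
    ((Finset.univ.filter
      (fun q : (Fin n → Fin m₁ → Bool) × (Fin n → Fin m₂ → Bool) =>
        ∀ i, g (q.1 i) (q.2 i) = z i)).card : ℝ)

/-- Two-party Fourier coefficient of
`C : ({-1,1}^{m₁})^n × ({-1,1}^{m₂})^n → ℝ` at a pair of tuples
`S^{[n]} = (S₁,…,Sₙ)`, `T^{[n]} = (T₁,…,Tₙ)`:
`Ĉ(S^{[n]},T^{[n]}) = E_{x,y}[C(x,y)·∏ᵢ x_{i,Sᵢ}·∏ⱼ y_{j,Tⱼ}]`. -/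
def liftedFourier {n m₁ m₂ : ℕ}
    (C : (Fin n → Fin m₁ → Bool) → (Fin n → Fin m₂ → Bool) → ℝ)
    (S : Fin n → Finset (Fin m₁)) (T : Fin n → Finset (Fin m₂)) : ℝ :=
  (((2 : ℝ) ^ m₁) ^ n * ((2 : ℝ) ^ m₂) ^ n)⁻¹ *
    ∑ x : Fin n → Fin m₁ → Bool, ∑ y : Fin n → Fin m₂ → Bool,
      C x y * (∏ i, ∏ j ∈ S i, sgnb (x i j)) * ∏ i, ∏ j ∈ T i, sgnb (y i j)

lemma prod_indicator' {ι : Type*} [Fintype ι] (p : ι → Prop) [DecidablePred p] :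
    (if (∀ i, p i) then (1:ℝ) else 0) = ∏ i, if p i then (1:ℝ) else 0 := by
  by_cases h : ∀ i, p i
  · rw [if_pos h, Finset.prod_congr rfl (fun i _ => if_pos (h i))]
    simp
  · rw [if_neg h]
    push_neg at h
    obtain ⟨i, hi⟩ := h
    exact (Finset.prod_eq_zero (Finset.mem_univ i)
      (by simp [hi] : (if p i then (1:ℝ) else 0) = 0)).symm

lemma delta_sum {m : ℕ} (x a : Fin m → Bool) :
    ∑ S : Finset (Fin m), ∏ j ∈ S, (sgnb (x j) * sgnb (a j))
      = if x = a then (2:ℝ)^m else 0 := by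
  have key : ∀ j, sgnb (x j) * sgnb (a j) + 1 = if x j = a j then 2 else 0 := by
    intro j; cases hx : x j <;> cases ha : a j <;> simp_all [sgnb] <;> norm_num
  have h1 : (∏ j, (sgnb (x j) * sgnb (a j) + 1))
      = ∑ S : Finset (Fin m), ∏ j ∈ S, (sgnb (x j) * sgnb (a j)) := by
    rw [Finset.prod_add]
    simp [Finset.powerset_univ]
  rw [← h1]
  simp only [key]
  by_cases h : x = a
  · rw [if_pos h, Finset.prod_congr rfl (fun j _ => if_pos (congrFun h j))]
    simp
  · rw [if_neg h]
    obtain ⟨j, hj⟩ : ∃ j, x j ≠ a j := by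
      by_contra hc; push_neg at hc; exact h (funext hc)
    exact Finset.prod_eq_zero (Finset.mem_univ j)
      (by simp [hj] : (if x j = a j then (2:ℝ) else 0) = 0)

lemma sum_swap4 {α β γ δ : Type*} [Fintype α] [Fintype β] [Fintype γ] [Fintype δ]
    (f : α → β → γ → δ → ℝ) :
    (∑ S : α, ∑ T : β, ∑ x : γ, ∑ y : δ, f S T x y)
      = ∑ x : γ, ∑ y : δ, ∑ S : α, ∑ T : β, f S T x y := by
  rw [show (∑ S : α, ∑ T : β, ∑ x : γ, ∑ y : δ, f S T x y)
      = ∑ S : α, ∑ x : γ, ∑ T : β, ∑ y : δ, f S T x y from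
    Finset.sum_congr rfl fun S _ => Finset.sum_comm]
  rw [show (∑ S : α, ∑ x : γ, ∑ T : β, ∑ y : δ, f S T x y)
      = ∑ x : γ, ∑ S : α, ∑ T : β, ∑ y : δ, f S T x y from Finset.sum_comm]
  refine Finset.sum_congr rfl fun x _ => ?_
  rw [show (∑ S : α, ∑ T : β, ∑ y : δ, f S T x y)
      = ∑ S : α, ∑ y : δ, ∑ T : β, f S T x y from
    Finset.sum_congr rfl fun S _ => Finset.sum_comm]
  exact Finset.sum_comm

lemma inversion {m₁ m₂ : ℕ} (g : (Fin m₁ → Bool) → (Fin m₂ → Bool) → Bool)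
    (a : Fin m₁ → Bool) (b : Fin m₂ → Bool) :
    ∑ S : Finset (Fin m₁), ∑ T : Finset (Fin m₂),
      gFourier g S T * (∏ j ∈ S, sgnb (a j)) * ∏ j ∈ T, sgnb (b j)
      = sgnb (g a b) := by
  have step1 : ∑ S : Finset (Fin m₁), ∑ T : Finset (Fin m₂),
      gFourier g S T * (∏ j ∈ S, sgnb (a j)) * ∏ j ∈ T, sgnb (b j)
      = ((2 : ℝ) ^ m₁ * (2 : ℝ) ^ m₂)⁻¹ *
        ∑ x : Fin m₁ → Bool, ∑ y : Fin m₂ → Bool,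
          sgnb (g x y) *
            (∑ S : Finset (Fin m₁), ∏ j ∈ S, (sgnb (x j) * sgnb (a j))) *
            (∑ T : Finset (Fin m₂), ∏ j ∈ T, (sgnb (y j) * sgnb (b j))) := by
    have per : ∀ (S : Finset (Fin m₁)) (T : Finset (Fin m₂)),
        gFourier g S T * (∏ j ∈ S, sgnb (a j)) * ∏ j ∈ T, sgnb (b j)
        = ∑ x : Fin m₁ → Bool, ∑ y : Fin m₂ → Bool,
            ((2 : ℝ) ^ m₁ * (2 : ℝ) ^ m₂)⁻¹ * (sgnb (g x y) *
              (∏ j ∈ S, (sgnb (x j) * sgnb (a j))) *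
              ∏ j ∈ T, (sgnb (y j) * sgnb (b j))) := by
      intro S T
      rw [gFourier]
      simp only [Finset.sum_mul, Finset.mul_sum, Finset.prod_mul_distrib]
      refine Finset.sum_congr rfl fun x _ => Finset.sum_congr rfl fun y _ => ?_
      ring
    simp only [per]
    rw [sum_swap4 (fun S T x y => ((2 : ℝ) ^ m₁ * (2 : ℝ) ^ m₂)⁻¹ * (sgnb (g x y) *
              (∏ j ∈ S, (sgnb (x j) * sgnb (a j))) *
              ∏ j ∈ T, (sgnb (y j) * sgnb (b j))))]
    rw [Finset.mul_sum]
    refine Finset.sum_congr rfl fun x _ => ?_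
    rw [Finset.mul_sum]
    refine Finset.sum_congr rfl fun y _ => ?_
    simp only [Finset.mul_sum, Finset.sum_mul]
    exact Finset.sum_comm
  rw [step1]
  simp only [delta_sum]
  rw [Fintype.sum_eq_single a (fun x hx => by
    simp [if_neg hx])]
  rw [Fintype.sum_eq_single b (fun y hy => by
    simp [if_neg hy])]
  simp only [if_pos rfl]
  have h1 : (2:ℝ)^m₁ ≠ 0 := by positivity
  have h2 : (2:ℝ)^m₂ ≠ 0 := by positivity
  field_simp
  rw [if_pos trivial, if_pos trivial]
  ring


lemma inversion_nonempty {m₁ m₂ : ℕ} (g : (Fin m₁ → Bool) → (Fin m₂ → Bool) → Bool)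
    (hg : BalancedGadget g) (a : Fin m₁ → Bool) (b : Fin m₂ → Bool) :
    ∑ p ∈ (Finset.univ.filter
        (fun p : Finset (Fin m₁) × Finset (Fin m₂) => p.1.Nonempty ∧ p.2.Nonempty)),
      gFourier g p.1 p.2 * (∏ j ∈ p.1, sgnb (a j)) * ∏ j ∈ p.2, sgnb (b j)
      = sgnb (g a b) := by
  rw [Finset.sum_filter_of_ne]
  · rw [← inversion g a b, ← Fintype.sum_prod_type']
  · intro p _ hne
    by_contra hc
    have h0 : gFourier g p.1 p.2 = 0 := by
      apply hg
      rcases Finset.eq_empty_or_nonempty p.1 with h | h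
      · exact Or.inl h
      rcases Finset.eq_empty_or_nonempty p.2 with h' | h'
      · exact Or.inr h'
      exact absurd ⟨h, h'⟩ hc
    exact hne (by rw [h0, zero_mul, zero_mul])

lemma sum_sgnb_zero {m₁ m₂ : ℕ} (g : (Fin m₁ → Bool) → (Fin m₂ → Bool) → Bool)
    (hg : BalancedGadget g) :
    ∑ x : Fin m₁ → Bool, ∑ y : Fin m₂ → Bool, sgnb (g x y) = 0 := by
  have h := hg ∅ ∅ (Or.inl rfl)
  rw [gFourier] at h
  simp only [Finset.prod_empty, mul_one] at h
  rcases mul_eq_zero.mp h with h' | h'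
  · exact absurd h' (by positivity)
  · exact h'

lemma gadget_count {m₁ m₂ : ℕ} (g : (Fin m₁ → Bool) → (Fin m₂ → Bool) → Bool)
    (hg : BalancedGadget g) (c : Bool) :
    ∑ a : Fin m₁ → Bool, ∑ b : Fin m₂ → Bool, (if g a b = c then (1:ℝ) else 0)
      = (2:ℝ)^m₁ * (2:ℝ)^m₂ / 2 := by
  have key : ∀ t : Bool, (if t = c then (1:ℝ) else 0) = 1/2 + sgnb c / 2 * sgnb t := by
    intro t; cases t <;> cases c <;> norm_num [sgnb]
  simp only [key, Finset.sum_add_distrib, ← Finset.mul_sum]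
  rw [sum_sgnb_zero g hg, mul_zero, add_zero]
  simp [Finset.sum_const, Finset.card_univ]
  ring

lemma sum_prod_pi {n : ℕ} {A B : Type*} [Fintype A] [Fintype B] [DecidableEq A] [DecidableEq B]
    (F : Fin n → A → B → ℝ) :
    ∑ x : Fin n → A, ∑ y : Fin n → B, ∏ i, F i (x i) (y i)
      = ∏ i, ∑ a : A, ∑ b : B, F i a b := by
  have h1 : ∀ i : Fin n, (∑ a : A, ∑ b : B, F i a b) = ∑ p : A × B, F i p.1 p.2 :=
    fun i => (Fintype.sum_prod_type' _).symm
  simp only [h1]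
  rw [show (∏ i : Fin n, ∑ p : A × B, F i p.1 p.2)
      = ∑ q ∈ Fintype.piFinset (fun _ : Fin n => (Finset.univ : Finset (A × B))),
          ∏ i, F i (q i).1 (q i).2 from Finset.prod_univ_sum _ _]
  rw [Fintype.piFinset_univ]
  rw [← Fintype.sum_prod_type']
  exact (Fintype.sum_equiv (Equiv.arrowProdEquivProdArrow (Fin n) (fun _ => A) (fun _ => B))
    (fun q => ∏ i, F i (q i).1 (q i).2)
    (fun p => ∏ i, F i (p.1 i) (p.2 i)) (fun q => rfl)).symm

lemma fiber_card_s14 {n m₁ m₂ : ℕ} (g : (Fin m₁ → Bool) → (Fin m₂ → Bool) → Bool)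
    (hg : BalancedGadget g) (z : Fin n → Bool) :
    ((Finset.univ.filter
      (fun q : (Fin n → Fin m₁ → Bool) × (Fin n → Fin m₂ → Bool) =>
        ∀ i, g (q.1 i) (q.2 i) = z i)).card : ℝ)
      = ((2:ℝ)^m₁ * (2:ℝ)^m₂ / 2)^n := by
  rw [Finset.card_filter]
  push_cast
  rw [show (∑ q : (Fin n → Fin m₁ → Bool) × (Fin n → Fin m₂ → Bool),
        if ∀ i, g (q.1 i) (q.2 i) = z i then (1:ℝ) else 0)
      = ∑ x : Fin n → Fin m₁ → Bool, ∑ y : Fin n → Fin m₂ → Bool,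
        if ∀ i, g (x i) (y i) = z i then (1:ℝ) else 0 from
    Fintype.sum_prod_type' (f := fun (x : Fin n → Fin m₁ → Bool) (y : Fin n → Fin m₂ → Bool) =>
      if ∀ i, g (x i) (y i) = z i then (1:ℝ) else 0)]
  have key : ∀ (x : Fin n → Fin m₁ → Bool) (y : Fin n → Fin m₂ → Bool),
      (if ∀ i, g (x i) (y i) = z i then (1:ℝ) else 0)
        = ∏ i, if g (x i) (y i) = z i then (1:ℝ) else 0 := by
    intro x y
    by_cases h : ∀ i, g (x i) (y i) = z i
    · rw [if_pos h, Finset.prod_congr rfl (fun i _ => if_pos (h i))]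
      simp
    · rw [if_neg h]
      push_neg at h
      obtain ⟨i, hi⟩ := h
      exact (Finset.prod_eq_zero (Finset.mem_univ i)
        (by simp [hi] : (if g (x i) (y i) = z i then (1:ℝ) else 0) = 0)).symm
  simp only [key]
  rw [sum_prod_pi (fun i a b => if g a b = z i then (1:ℝ) else 0)]
  rw [Finset.prod_congr rfl (fun i _ => gadget_count g hg (z i))]
  simp [div_pow]

lemma sum_swap3 {α β γ : Type*} [Fintype α] [Fintype β] [Fintype γ] (f : α → β → γ → ℝ) :
    (∑ z : α, ∑ x : β, ∑ y : γ, f z x y) = ∑ x : β, ∑ y : γ, ∑ z : α, f z x y := by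
  rw [Finset.sum_comm]
  exact Finset.sum_congr rfl fun x _ => Finset.sum_comm

lemma W_eval {n m₁ m₂ : ℕ} (g : (Fin m₁ → Bool) → (Fin m₂ → Bool) → Bool)
    (hg : BalancedGadget g) (I : Finset (Fin n))
    (x : Fin n → Fin m₁ → Bool) (y : Fin n → Fin m₂ → Bool) :
    ∑ S : Fin n → Finset (Fin m₁), ∑ T : Fin n → Finset (Fin m₂),
      (if (∀ i ∈ I, (S i).Nonempty ∧ (T i).Nonempty) ∧
          (∀ j, j ∉ I → S j = ∅ ∧ T j = ∅) then
        (∏ i, ∏ j ∈ S i, sgnb (x i j)) * (∏ i, ∏ j ∈ T i, sgnb (y i j)) *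
          ∏ i ∈ I, gFourier g (S i) (T i)
      else 0)
      = ∏ i ∈ I, sgnb (g (x i) (y i)) := by
  classical
  set A : Fin n → Finset (Finset (Fin m₁) × Finset (Fin m₂)) := fun i =>
    if i ∈ I then Finset.univ.filter
      (fun p : Finset (Fin m₁) × Finset (Fin m₂) => p.1.Nonempty ∧ p.2.Nonempty)
    else {(∅, ∅)} with hA
  set f : Fin n → Finset (Fin m₁) × Finset (Fin m₂) → ℝ := fun i p =>
    if i ∈ I then gFourier g p.1 p.2 * (∏ j ∈ p.1, sgnb (x i j)) * ∏ j ∈ p.2, sgnb (y i j)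
    else 1 with hf
  have step1 : ∑ S : Fin n → Finset (Fin m₁), ∑ T : Fin n → Finset (Fin m₂),
      (if (∀ i ∈ I, (S i).Nonempty ∧ (T i).Nonempty) ∧
          (∀ j, j ∉ I → S j = ∅ ∧ T j = ∅) then
        (∏ i, ∏ j ∈ S i, sgnb (x i j)) * (∏ i, ∏ j ∈ T i, sgnb (y i j)) *
          ∏ i ∈ I, gFourier g (S i) (T i)
      else 0)
      = ∑ q : Fin n → Finset (Fin m₁) × Finset (Fin m₂),
          (if (∀ i, q i ∈ A i) then ∏ i, f i (q i) else 0) := by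
    rw [← Fintype.sum_prod_type']
    refine (Fintype.sum_equiv (Equiv.arrowProdEquivProdArrow (Fin n) _ _)
      _ _ (fun q => ?_)).symm
    simp only [Equiv.arrowProdEquivProdArrow, Equiv.coe_fn_mk]
    set S : Fin n → Finset (Fin m₁) := fun i => (q i).1 with hS
    set T : Fin n → Finset (Fin m₂) := fun i => (q i).2 with hT
    by_cases h : ∀ i, q i ∈ A i
    · have hcond : (∀ i ∈ I, (S i).Nonempty ∧ (T i).Nonempty) ∧
          (∀ j, j ∉ I → S j = ∅ ∧ T j = ∅) := by
        constructor
        · intro i hi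
          have := h i
          rw [hA] at this
          simp only [if_pos hi, Finset.mem_filter] at this
          exact this.2
        · intro j hj
          have := h j
          rw [hA] at this
          simp only [if_neg hj, Finset.mem_singleton] at this
          exact ⟨by rw [hS]; simp [this], by rw [hT]; simp [this]⟩
      rw [if_pos h]
      have goal2 : (∏ i, ∏ j ∈ S i, sgnb (x i j)) * (∏ i, ∏ j ∈ T i, sgnb (y i j)) *
          ∏ i ∈ I, gFourier g (S i) (T i) = ∏ i, f i (q i) := by
        have e1 : (∏ i, ∏ j ∈ S i, sgnb (x i j)) = ∏ i ∈ I, ∏ j ∈ S i, sgnb (x i j) :=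
          (Finset.prod_subset (Finset.subset_univ I)
            (fun i _ hi => by rw [(hcond.2 i hi).1]; simp)).symm
        have e2 : (∏ i, ∏ j ∈ T i, sgnb (y i j)) = ∏ i ∈ I, ∏ j ∈ T i, sgnb (y i j) :=
          (Finset.prod_subset (Finset.subset_univ I)
            (fun i _ hi => by rw [(hcond.2 i hi).2]; simp)).symm
        have e3 : (∏ i, f i (q i)) = ∏ i ∈ I, f i (q i) :=
          (Finset.prod_subset (Finset.subset_univ I)
            (fun i _ hi => by rw [hf]; simp [hi])).symm
        rw [e1, e2, e3, ← Finset.prod_mul_distrib, ← Finset.prod_mul_distrib]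
        refine Finset.prod_congr rfl fun i hi => ?_
        rw [hf]
        simp only [if_pos hi]
        ring
      exact goal2.symm.trans (if_pos hcond).symm
    · rw [if_neg h]
      have hcond : ¬ ((∀ i ∈ I, (S i).Nonempty ∧ (T i).Nonempty) ∧
          (∀ j, j ∉ I → S j = ∅ ∧ T j = ∅)) := by
        intro hc
        apply h
        intro i
        rw [hA]
        by_cases hi : i ∈ I
        · simp only [if_pos hi, Finset.mem_filter]
          exact ⟨Finset.mem_univ _, hc.1 i hi⟩
        · simp only [if_neg hi, Finset.mem_singleton]
          have := hc.2 i hi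
          exact Prod.ext this.1 this.2
      exact (if_neg hcond).symm
  rw [step1]
  rw [← Finset.sum_filter]
  rw [show Finset.univ.filter (fun q : Fin n → Finset (Fin m₁) × Finset (Fin m₂) =>
      ∀ i, q i ∈ A i) = Fintype.piFinset A from by
    ext q; simp [Fintype.mem_piFinset]]
  rw [← Finset.prod_univ_sum]
  have e4 : ∀ i, (∑ p ∈ A i, f i p) = if i ∈ I then sgnb (g (x i) (y i)) else 1 := by
    intro i
    by_cases hi : i ∈ I
    · simp only [hA, hf, if_pos hi]
      exact inversion_nonempty g hg (x i) (y i)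
    · simp only [hA, hf, if_neg hi]
      simp
  rw [Finset.prod_congr rfl (fun i _ => e4 i)]
  rw [← Finset.prod_subset (Finset.subset_univ I) (fun i _ hi => by rw [if_neg hi])]
  exact Finset.prod_congr rfl fun i hi => if_pos hi

/-- **Fourier coefficients of the `g`-fiber.** For a balanced gadget `g` and
any `C`, the Fourier coefficient of `C_{↓g}` at `I ⊆ [n]` equals
`∑ Ĉ(S^I,T^I)·∏_{i∈I} ĝ(Sᵢ,Tᵢ)`, where the sum runs over tuples with `Sᵢ,Tᵢ`
nonempty for `i ∈ I` and empty for `i ∉ I`. -/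
theorem gfiber_fourier_formula (n m₁ m₂ : ℕ)
    (g : (Fin m₁ → Bool) → (Fin m₂ → Bool) → Bool) (hg : BalancedGadget g)
    (C : (Fin n → Fin m₁ → Bool) → (Fin n → Fin m₂ → Bool) → ℝ)
    (I : Finset (Fin n)) :
    bFourier (gFiber g C) I
      = ∑ S : Fin n → Finset (Fin m₁), ∑ T : Fin n → Finset (Fin m₂),
          if (∀ i ∈ I, (S i).Nonempty ∧ (T i).Nonempty) ∧
             (∀ j, j ∉ I → S j = ∅ ∧ T j = ∅) then
            liftedFourier C S T * ∏ i ∈ I, gFourier g (S i) (T i)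
          else 0 := by
  classical
  have pow_id : (2:ℝ)^n * ((2:ℝ)^m₁ * (2:ℝ)^m₂ / 2)^n = ((2:ℝ)^m₁)^n * ((2:ℝ)^m₂)^n := by
    rw [← mul_pow, ← mul_pow]
    congr 1
    ring
  -- LHS computation
  have lhs_eq : bFourier (gFiber g C) I
      = ((2:ℝ)^n)⁻¹ * (((((2:ℝ)^m₁ * (2:ℝ)^m₂ / 2))^n)⁻¹ *
          ∑ x : Fin n → Fin m₁ → Bool, ∑ y : Fin n → Fin m₂ → Bool,
            C x y * ∏ i ∈ I, sgnb (g (x i) (y i))) := by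
    rw [bFourier]
    congr 1
    have hz : ∀ z : Fin n → Bool, gFiber g C z * ∏ i ∈ I, sgnb (z i)
        = ((((2:ℝ)^m₁ * (2:ℝ)^m₂ / 2))^n)⁻¹ *
            ∑ x : Fin n → Fin m₁ → Bool, ∑ y : Fin n → Fin m₂ → Bool,
              ((if ∀ i, g (x i) (y i) = z i then C x y else 0) * ∏ i ∈ I, sgnb (z i)) := by
      intro z
      rw [gFiber, fiber_card_s14 g hg z, div_mul_eq_mul_div, div_eq_inv_mul]
      congr 1
      rw [Finset.sum_mul]
      exact Finset.sum_congr rfl fun x _ => Finset.sum_mul _ _ _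
    simp only [hz]
    rw [← Finset.mul_sum]
    congr 1
    rw [Finset.sum_comm]
    refine Finset.sum_congr rfl fun x _ => ?_
    rw [Finset.sum_comm]
    refine Finset.sum_congr rfl fun y _ => ?_
    rw [Fintype.sum_eq_single (fun i => g (x i) (y i)) ?_]
    · rw [if_pos (fun i => rfl)]
    · intro z hz'
      rw [if_neg, zero_mul]
      intro hcc
      exact hz' (funext fun i => (hcc i)).symm
  -- RHS computation
  have stepA : ∀ (S : Fin n → Finset (Fin m₁)) (T : Fin n → Finset (Fin m₂)),
      (if (∀ i ∈ I, (S i).Nonempty ∧ (T i).Nonempty) ∧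
          (∀ j, j ∉ I → S j = ∅ ∧ T j = ∅) then
        liftedFourier C S T * ∏ i ∈ I, gFourier g (S i) (T i)
      else 0)
      = ∑ x : Fin n → Fin m₁ → Bool, ∑ y : Fin n → Fin m₂ → Bool,
          (if (∀ i ∈ I, (S i).Nonempty ∧ (T i).Nonempty) ∧
              (∀ j, j ∉ I → S j = ∅ ∧ T j = ∅) then
            ((((2:ℝ)^m₁)^n * ((2:ℝ)^m₂)^n)⁻¹ * C x y) *
              ((∏ i, ∏ j ∈ S i, sgnb (x i j)) * (∏ i, ∏ j ∈ T i, sgnb (y i j)) *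
                ∏ i ∈ I, gFourier g (S i) (T i))
          else 0) := by
    intro S T
    by_cases h : (∀ i ∈ I, (S i).Nonempty ∧ (T i).Nonempty) ∧
        (∀ j, j ∉ I → S j = ∅ ∧ T j = ∅)
    · simp only [if_pos h, liftedFourier]
      simp only [Finset.sum_mul, Finset.mul_sum]
      refine Finset.sum_congr rfl fun x _ => Finset.sum_congr rfl fun y _ => ?_
      ring
    · simp only [if_neg h, Finset.sum_const_zero]
  have rhs_eq : (∑ S : Fin n → Finset (Fin m₁), ∑ T : Fin n → Finset (Fin m₂),
        if (∀ i ∈ I, (S i).Nonempty ∧ (T i).Nonempty) ∧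
           (∀ j, j ∉ I → S j = ∅ ∧ T j = ∅) then
          liftedFourier C S T * ∏ i ∈ I, gFourier g (S i) (T i)
        else 0)
      = ((((2:ℝ)^m₁)^n * ((2:ℝ)^m₂)^n)⁻¹) *
          ∑ x : Fin n → Fin m₁ → Bool, ∑ y : Fin n → Fin m₂ → Bool,
            C x y * ∏ i ∈ I, sgnb (g (x i) (y i)) := by
    simp only [stepA]
    conv_lhs => enter [2, S]; rw [Finset.sum_comm]
    rw [Finset.sum_comm]
    conv_lhs => enter [2, x, 2, S]; rw [Finset.sum_comm]
    conv_lhs => enter [2, x]; rw [Finset.sum_comm]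
    rw [Finset.mul_sum]
    refine Finset.sum_congr rfl fun x _ => ?_
    rw [Finset.mul_sum]
    refine Finset.sum_congr rfl fun y _ => ?_
    have fact : ∀ (S : Fin n → Finset (Fin m₁)) (T : Fin n → Finset (Fin m₂)),
        (if (∀ i ∈ I, (S i).Nonempty ∧ (T i).Nonempty) ∧
            (∀ j, j ∉ I → S j = ∅ ∧ T j = ∅) then
          ((((2:ℝ)^m₁)^n * ((2:ℝ)^m₂)^n)⁻¹ * C x y) *
            ((∏ i, ∏ j ∈ S i, sgnb (x i j)) * (∏ i, ∏ j ∈ T i, sgnb (y i j)) *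
              ∏ i ∈ I, gFourier g (S i) (T i))
        else 0)
        = ((((2:ℝ)^m₁)^n * ((2:ℝ)^m₂)^n)⁻¹ * C x y) *
            (if (∀ i ∈ I, (S i).Nonempty ∧ (T i).Nonempty) ∧
                (∀ j, j ∉ I → S j = ∅ ∧ T j = ∅) then
              (∏ i, ∏ j ∈ S i, sgnb (x i j)) * (∏ i, ∏ j ∈ T i, sgnb (y i j)) *
                ∏ i ∈ I, gFourier g (S i) (T i)
            else 0) := by
      intro S T
      by_cases h : (∀ i ∈ I, (S i).Nonempty ∧ (T i).Nonempty) ∧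
          (∀ j, j ∉ I → S j = ∅ ∧ T j = ∅)
      · simp only [if_pos h]
      · simp only [if_neg h, mul_zero]
    simp only [fact, ← Finset.mul_sum]
    rw [W_eval g hg I x y]
    ring
  rw [lhs_eq, rhs_eq, ← mul_assoc, ← mul_inv, pow_id]
end
end

section
/- Let g : {−1,1}^{m₁} × {−1,1}^{m₂} → {−1,1} be a balanced gadget, and let k ≥ 1, d ≥ 0, n ≥ 1 and B ≥ 0. Suppose every randomized protocol C' on ({−1,1}^{m₁})^n × ({−1,1}^{m₂})^n with communication cost at most d satisfies L_{1,k}(C'_{↓g}) ≤ B. Then every randomized protocol C on {−1,1}^n × {−1,1}^n with communication cost at most d satisfies L_{1,k}(C_{↓XOR}) ≤ (max_{S,T} |ĝ(S,T)|)^{−k}·B; moreover max_{S,T} |ĝ(S,T)| ≥ 2^{−(m₁+m₂)/2}, so L_{1,k}(C_{↓XOR}) ≤ 2^{(m₁+m₂)·k/2}·B. -/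
open MeasureTheory ProbabilityTheory Finset Real

noncomputable section

lemma sgnb_sq (b : Bool) : sgnb b * sgnb b = 1 := by cases b <;> simp [sgnb]
lemma sgnb_xor (a b : Bool) : sgnb (xor a b) = sgnb a * sgnb b := by
  cases a <;> cases b <;> simp [sgnb]
lemma sum_sgnb : ∑ b : Bool, sgnb b = 0 := by simp [sgnb]
lemma abs_sgnb (b : Bool) : |sgnb b| = 1 := by cases b <;> simp [sgnb]

def chi {m : ℕ} (S : Finset (Fin m)) (u : Fin m → Bool) : ℝ := ∏ j ∈ S, sgnb (u j)

instance : Std.Commutative xor := ⟨Bool.xor_comm⟩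
instance : Std.Associative xor := ⟨Bool.xor_assoc⟩

def parityB {m : ℕ} (S : Finset (Fin m)) (u : Fin m → Bool) : Bool :=
  S.fold xor false u

lemma sgnb_parityB {m : ℕ} (S : Finset (Fin m)) (u : Fin m → Bool) :
    sgnb (parityB S u) = chi S u := by
  classical
  induction S using Finset.induction with
  | empty => simp [parityB, chi, sgnb]
  | @insert a s ha ih =>
      rw [chi, Finset.prod_insert ha, parityB, Finset.fold_insert ha, sgnb_xor,
        show (fold xor false u s) = parityB s u from rfl, ih]
      rfl

lemma indicator_eq (a b : Bool) :
    (if a = b then (1:ℝ) else 0) = (1 + sgnb a * sgnb b) / 2 := by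
  cases a <;> cases b <;> norm_num [sgnb]

-- tensor lemmas
lemma tensor {n : ℕ} {β : Type} [Fintype β] (f : Fin n → β → ℝ) :
    ∑ x : Fin n → β, ∏ i, f i (x i) = ∏ i, ∑ u : β, f i u := by
  classical
  rw [Finset.prod_univ_sum (fun _ => (univ : Finset β)) f, Fintype.piFinset_univ]

lemma tensor2 {n : ℕ} {β γ : Type} [Fintype β] [Fintype γ] (f : Fin n → β → γ → ℝ) :
    ∑ x : Fin n → β, ∑ y : Fin n → γ, ∏ i, f i (x i) (y i)
      = ∏ i, ∑ u : β, ∑ v : γ, f i u v := by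
  classical
  have h1 : ∀ x : Fin n → β, ∑ y : Fin n → γ, ∏ i, f i (x i) (y i)
      = ∏ i, ∑ v : γ, f i (x i) v := fun x => tensor (fun i v => f i (x i) v)
  simp_rw [h1]
  exact tensor (fun i u => ∑ v : γ, f i u v)

lemma sum_chi {m : ℕ} {S : Finset (Fin m)} (hS : S.Nonempty) :
    ∑ u : Fin m → Bool, chi S u = 0 := by
  classical
  have h : ∀ u : Fin m → Bool, chi S u = ∏ j, (if j ∈ S then sgnb (u j) else 1) := by
    intro u
    rw [Finset.prod_ite_mem, Finset.univ_inter]; rfl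
  simp_rw [h]
  rw [tensor (fun j b => if j ∈ S then sgnb b else 1)]
  obtain ⟨j0, hj0⟩ := hS
  refine Finset.prod_eq_zero (Finset.mem_univ j0) ?_
  simp [hj0, sgnb]

lemma sum_parity_indicator {m : ℕ} {S : Finset (Fin m)} (hS : S.Nonempty) (a : Bool) :
    ∑ u : Fin m → Bool, (if parityB S u = a then (1:ℝ) else 0) = 2 ^ m / 2 := by
  classical
  simp_rw [indicator_eq, sgnb_parityB]
  rw [← Finset.sum_div]
  rw [Finset.sum_add_distrib, ← Finset.sum_mul, sum_chi hS]
  simp [Finset.card_univ]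


section Gadget

lemma pull2 {A B : Type} [Fintype A] [Fintype B] (f : A → B → ℝ) (c : ℝ) :
    ∑ x : A, ∑ y : B, f x y * c = (∑ x : A, ∑ y : B, f x y) * c := by
  rw [Finset.sum_mul]
  exact Finset.sum_congr rfl fun x _ => by rw [Finset.sum_mul]


variable {m₁ m₂ : ℕ} {g : (Fin m₁ → Bool) → (Fin m₂ → Bool) → Bool}

lemma K_pos : (0:ℝ) < (2 : ℝ) ^ m₁ * (2 : ℝ) ^ m₂ := by positivity

lemma gFourier_eq (S : Finset (Fin m₁)) (T : Finset (Fin m₂)) :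
    ∑ x : Fin m₁ → Bool, ∑ y : Fin m₂ → Bool, sgnb (g x y) * chi S x * chi T y
      = (2 : ℝ) ^ m₁ * (2 : ℝ) ^ m₂ * gFourier g S T := by
  rw [gFourier]; field_simp; rfl

lemma hs00 (hg : BalancedGadget g) :
    ∑ x : Fin m₁ → Bool, ∑ y : Fin m₂ → Bool, sgnb (g x y) = 0 := by
  have := gFourier_eq (g := g) (∅ : Finset (Fin m₁)) (∅ : Finset (Fin m₂))
  rw [hg ∅ ∅ (Or.inl rfl)] at this
  simpa [chi] using this

lemma hs10 (hg : BalancedGadget g) (S : Finset (Fin m₁)) :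
    ∑ x : Fin m₁ → Bool, ∑ y : Fin m₂ → Bool, sgnb (g x y) * chi S x = 0 := by
  have := gFourier_eq (g := g) S (∅ : Finset (Fin m₂))
  rw [hg S ∅ (Or.inr rfl)] at this
  simpa [chi] using this

lemma hs01 (hg : BalancedGadget g) (T : Finset (Fin m₂)) :
    ∑ x : Fin m₁ → Bool, ∑ y : Fin m₂ → Bool, sgnb (g x y) * chi T y = 0 := by
  have := gFourier_eq (g := g) (∅ : Finset (Fin m₁)) T
  rw [hg ∅ T (Or.inl rfl)] at this
  simp only [chi, Finset.prod_empty, mul_one] at this ⊢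
  rw [mul_zero] at this
  exact this


-- count with g-constraint
lemma count_g (hg : BalancedGadget g) (c : Bool) :
    ∑ x : Fin m₁ → Bool, ∑ y : Fin m₂ → Bool, (if g x y = c then (1:ℝ) else 0)
      = (2 : ℝ) ^ m₁ * (2 : ℝ) ^ m₂ / 2 := by
  simp_rw [indicator_eq, ← Finset.sum_div, Finset.sum_add_distrib, ← Finset.sum_mul]
  rw [hs00 hg]
  simp [Finset.card_univ]

-- the per-coordinate weight (i ∈ U case)
lemma weight_eq (hg : BalancedGadget g) {S : Finset (Fin m₁)} {T : Finset (Fin m₂)}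
    (a b : Bool) :
    ∑ u : Fin m₁ → Bool, ∑ v : Fin m₂ → Bool,
        (if parityB S u = a then (1:ℝ) else 0) * (if parityB T v = b then (1:ℝ) else 0)
          * sgnb (g u v)
      = (2 : ℝ) ^ m₁ * (2 : ℝ) ^ m₂ / 4 * (sgnb a * sgnb b) * gFourier g S T := by
  have expand : ∀ (u : Fin m₁ → Bool) (v : Fin m₂ → Bool),
      (if parityB S u = a then (1:ℝ) else 0) * (if parityB T v = b then (1:ℝ) else 0)
          * sgnb (g u v)
        = (sgnb (g u v) + sgnb (g u v) * chi S u * sgnb a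
            + sgnb (g u v) * chi T v * sgnb b
            + sgnb (g u v) * chi S u * chi T v * (sgnb a * sgnb b)) / 4 := by
    intro u v
    rw [indicator_eq, indicator_eq, sgnb_parityB, sgnb_parityB]
    ring
  simp_rw [expand, ← Finset.sum_div, Finset.sum_add_distrib]
  rw [pull2 (fun u v => sgnb (g u v) * chi S u) (sgnb a),
    pull2 (fun u v => sgnb (g u v) * chi T v) (sgnb b),
    pull2 (fun u v => sgnb (g u v) * chi S u * chi T v) (sgnb a * sgnb b),
    hs00 hg, hs10 hg S, hs01 hg T, gFourier_eq]
  ring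

-- per-coordinate count (i ∉ U case)
lemma count_eq {S : Finset (Fin m₁)} {T : Finset (Fin m₂)}
    (hS : S.Nonempty) (hT : T.Nonempty) (a b : Bool) :
    ∑ u : Fin m₁ → Bool, ∑ v : Fin m₂ → Bool,
        (if parityB S u = a then (1:ℝ) else 0) * (if parityB T v = b then (1:ℝ) else 0)
      = (2 : ℝ) ^ m₁ * (2 : ℝ) ^ m₂ / 4 := by
  rw [← Finset.sum_mul_sum, sum_parity_indicator hS a, sum_parity_indicator hT b]
  ring

end Gadget

section Key
variable {m₁ m₂ : ℕ} {g : (Fin m₁ → Bool) → (Fin m₂ → Bool) → Bool}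

lemma swap4 {A B C D : Type} [Fintype A] [Fintype B] [Fintype C] [Fintype D]
    (f : A → B → C → D → ℝ) :
    ∑ x : A, ∑ y : B, ∑ a : C, ∑ b : D, f x y a b
      = ∑ a : C, ∑ b : D, ∑ x : A, ∑ y : B, f x y a b := by
  calc ∑ x : A, ∑ y : B, ∑ a : C, ∑ b : D, f x y a b
      = ∑ x : A, ∑ a : C, ∑ y : B, ∑ b : D, f x y a b :=
        Finset.sum_congr rfl fun x _ => Finset.sum_comm
    _ = ∑ a : C, ∑ x : A, ∑ y : B, ∑ b : D, f x y a b := Finset.sum_comm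
    _ = ∑ a : C, ∑ x : A, ∑ b : D, ∑ y : B, f x y a b :=
        Finset.sum_congr rfl fun a _ => Finset.sum_congr rfl fun x _ => Finset.sum_comm
    _ = ∑ a : C, ∑ b : D, ∑ x : A, ∑ y : B, f x y a b :=
        Finset.sum_congr rfl fun a _ => Finset.sum_comm

lemma card_fiber (hg : BalancedGadget g) (n : ℕ) (z : Fin n → Bool) :
    (((Finset.univ.filter
      (fun q : (Fin n → Fin m₁ → Bool) × (Fin n → Fin m₂ → Bool) =>
        ∀ i, g (q.1 i) (q.2 i) = z i)).card : ℕ) : ℝ)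
      = ((2:ℝ)^m₁ * (2:ℝ)^m₂ / 2) ^ n := by
  classical
  rw [Finset.card_filter]
  push_cast
  rw [Fintype.sum_prod_type]
  have h : ∀ (x : Fin n → Fin m₁ → Bool) (y : Fin n → Fin m₂ → Bool),
      (if (∀ i, g (x i) (y i) = z i) then (1:ℝ) else 0)
        = ∏ i, (if g (x i) (y i) = z i then (1:ℝ) else 0) := by
    intro x y; rw [Finset.prod_boole]; simp
  simp_rw [h]
  rw [tensor2 (fun i u v => if g u v = z i then (1:ℝ) else 0)]
  rw [Finset.prod_congr rfl (fun i _ => count_g hg (z i))]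
  simp [Finset.card_univ]
  rw [div_pow]

lemma bFourier_xorFiber {n : ℕ} (C : (Fin n → Bool) → (Fin n → Bool) → ℝ)
    (U : Finset (Fin n)) :
    bFourier (xorFiber C) U
      = ((2:ℝ)^n)⁻¹ * (((2:ℝ)^n)⁻¹
          * ∑ a : Fin n → Bool, ∑ b : Fin n → Bool, C a b * chi U a * chi U b) := by
  classical
  rw [bFourier]
  simp_rw [xorFiber, mul_assoc, ← Finset.mul_sum]
  congr 1
  simp_rw [Finset.sum_mul]
  congr 1
  rw [Finset.sum_comm]
  refine Finset.sum_congr rfl fun (x : Fin n → Bool) _ => ?_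
  have hinv : Function.Involutive (fun (z : Fin n → Bool) => fun i => xor (x i) (z i)) :=
    fun z => by funext i; simp
  rw [← Equiv.sum_comp hinv.toPerm
    (fun z => C x (fun i => xor (x i) (z i)) * ∏ i ∈ U, sgnb (z i))]
  refine Finset.sum_congr rfl fun b _ => ?_
  simp only [Function.Involutive.coe_toPerm]
  have h1 : (fun i => xor (x i) (xor (x i) (b i))) = b := by funext i; simp
  rw [h1]
  have h2 : ∏ i ∈ U, sgnb (xor (x i) (b i)) = chi U x * chi U b := by
    rw [chi, chi, ← Finset.prod_mul_distrib]
    exact Finset.prod_congr rfl fun i _ => sgnb_xor _ _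
  rw [h2]

lemma key_s15 (hg : BalancedGadget g) {S : Finset (Fin m₁)} {T : Finset (Fin m₂)}
    (hS : S.Nonempty) (hT : T.Nonempty)
    {n : ℕ} (C : (Fin n → Bool) → (Fin n → Bool) → ℝ) (U : Finset (Fin n)) :
    bFourier (gFiber g (fun x y => C (fun i => parityB S (x i)) (fun i => parityB T (y i)))) U
      = (gFourier g S T) ^ U.card * bFourier (xorFiber C) U := by
  classical
  set K : ℝ := (2:ℝ)^m₁ * (2:ℝ)^m₂ with hK
  have hKpos : (0:ℝ) < K := by positivity
  set γ : ℝ := gFourier g S T with hγ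
  set D : (Fin n → Fin m₁ → Bool) → (Fin n → Fin m₂ → Bool) → ℝ :=
    fun x y => C (fun i => parityB S (x i)) (fun i => parityB T (y i)) with hD
  -- Step 1: unfold bFourier/gFiber and pull out the constant denominator
  have hcard : ∀ z : Fin n → Bool,
      gFiber g D z = ((K/2)^n)⁻¹ * ∑ x, ∑ y, if ∀ i, g (x i) (y i) = z i then D x y else 0 := by
    intro z
    rw [gFiber, card_fiber hg n z, div_eq_mul_inv, mul_comm]
  -- a generic collapse lemma
  have collapse : ∀ (w1 w2 : Fin n → Bool) (F : (Fin n → Bool) → (Fin n → Bool) → ℝ),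
      ∑ a : Fin n → Bool, ∑ b : Fin n → Bool,
        (if w1 = a then (1:ℝ) else 0) * (if w2 = b then (1:ℝ) else 0) * F a b = F w1 w2 := by
    intro w1 w2 F
    have inner : ∀ a, ∑ b : Fin n → Bool, (if w2 = b then (1:ℝ) else 0) * F a b = F a w2 := by
      intro a; simp_rw [boole_mul]; rw [Finset.sum_ite_eq]; simp
    calc ∑ a : Fin n → Bool, ∑ b : Fin n → Bool,
          (if w1 = a then (1:ℝ) else 0) * (if w2 = b then (1:ℝ) else 0) * F a b
        = ∑ a : Fin n → Bool, (if w1 = a then (1:ℝ) else 0) *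
            ∑ b : Fin n → Bool, (if w2 = b then (1:ℝ) else 0) * F a b := by
          refine Finset.sum_congr rfl fun a _ => ?_
          rw [Finset.mul_sum]
          exact Finset.sum_congr rfl fun b _ => by ring
      _ = ∑ a : Fin n → Bool, (if w1 = a then (1:ℝ) else 0) * F a w2 := by simp_rw [inner]
      _ = F w1 w2 := by simp_rw [boole_mul]; rw [Finset.sum_ite_eq]; simp
  -- Step 1
  have step1 : ∑ z : Fin n → Bool,
        (∑ x, ∑ y, if ∀ i, g (x i) (y i) = z i then D x y else 0) * ∏ i ∈ U, sgnb (z i)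
      = ∑ x, ∑ y, D x y * ∏ i ∈ U, sgnb (g (x i) (y i)) := by
    simp_rw [Finset.sum_mul]
    rw [Finset.sum_comm]
    refine Finset.sum_congr rfl fun x _ => ?_
    rw [Finset.sum_comm]
    refine Finset.sum_congr rfl fun y _ => ?_
    simp_rw [ite_mul, zero_mul]
    have hcnd : ∀ z : Fin n → Bool,
        (∀ i, g (x i) (y i) = z i) ↔ ((fun i => g (x i) (y i)) = z) :=
      fun z => funext_iff.symm
    simp_rw [hcnd]
    rw [Finset.sum_ite_eq]
    simp
  -- splitting the per-coordinate product
  have hsplit : ∀ (x : Fin n → Fin m₁ → Bool) (y : Fin n → Fin m₂ → Bool)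
      (a b : Fin n → Bool),
      (∏ i, ((if parityB S (x i) = a i then (1:ℝ) else 0) *
             (if parityB T (y i) = b i then (1:ℝ) else 0) *
             (if i ∈ U then sgnb (g (x i) (y i)) else 1)))
        = (if (fun i => parityB S (x i)) = a then (1:ℝ) else 0) *
            (if (fun i => parityB T (y i)) = b then (1:ℝ) else 0) *
            ∏ i ∈ U, sgnb (g (x i) (y i)) := by
    intro x y a b
    rw [Finset.prod_mul_distrib, Finset.prod_mul_distrib, Finset.prod_boole, Finset.prod_boole,
      Finset.prod_ite_mem, Finset.univ_inter]
    congr 2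
    · simp [funext_iff]
    · simp [funext_iff]
  -- grouping
  have hgrp : ∀ (x : Fin n → Fin m₁ → Bool) (y : Fin n → Fin m₂ → Bool),
      D x y * ∏ i ∈ U, sgnb (g (x i) (y i))
        = ∑ a : Fin n → Bool, ∑ b : Fin n → Bool,
            (∏ i, ((if parityB S (x i) = a i then (1:ℝ) else 0) *
                   (if parityB T (y i) = b i then (1:ℝ) else 0) *
                   (if i ∈ U then sgnb (g (x i) (y i)) else 1))) * C a b := by
    intro x y
    simp_rw [hsplit]
    have : ∀ (a b : Fin n → Bool),
        ((if (fun i => parityB S (x i)) = a then (1:ℝ) else 0) *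
          (if (fun i => parityB T (y i)) = b then (1:ℝ) else 0) *
          ∏ i ∈ U, sgnb (g (x i) (y i))) * C a b
        = (if (fun i => parityB S (x i)) = a then (1:ℝ) else 0) *
          (if (fun i => parityB T (y i)) = b then (1:ℝ) else 0) *
          ((∏ i ∈ U, sgnb (g (x i) (y i))) * C a b) := by intro a b; ring
    simp_rw [this, collapse (fun i => parityB S (x i)) (fun i => parityB T (y i))
      (fun a b => (∏ i ∈ U, sgnb (g (x i) (y i))) * C a b)]
    rw [hD]
    ring
  -- per-coordinate evaluation
  have hper : ∀ (a b : Fin n → Bool),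
      (∑ x : Fin n → Fin m₁ → Bool, ∑ y : Fin n → Fin m₂ → Bool,
        ∏ i, ((if parityB S (x i) = a i then (1:ℝ) else 0) *
              (if parityB T (y i) = b i then (1:ℝ) else 0) *
              (if i ∈ U then sgnb (g (x i) (y i)) else 1)))
      = (K/4)^n * γ^(U.card) * (chi U a * chi U b) := by
    intro a b
    rw [tensor2 (fun i u v => (if parityB S u = a i then (1:ℝ) else 0) *
        (if parityB T v = b i then (1:ℝ) else 0) * (if i ∈ U then sgnb (g u v) else 1))]
    have hi : ∀ i : Fin n,
        (∑ u : Fin m₁ → Bool, ∑ v : Fin m₂ → Bool,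
          (if parityB S u = a i then (1:ℝ) else 0) *
          (if parityB T v = b i then (1:ℝ) else 0) * (if i ∈ U then sgnb (g u v) else 1))
        = (K/4) * (if i ∈ U then sgnb (a i) * sgnb (b i) * γ else 1) := by
      intro i
      by_cases hiU : i ∈ U
      · simp only [hiU, if_true]
        rw [weight_eq hg (a i) (b i)]
        ring
      · simp only [hiU, if_false]
        simp_rw [mul_one]
        rw [count_eq hS hT]
    rw [Finset.prod_congr rfl (fun i _ => hi i), Finset.prod_mul_distrib,
      Finset.prod_const, Finset.card_univ, Fintype.card_fin,
      Finset.prod_ite_mem, Finset.univ_inter, Finset.prod_mul_distrib,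
      Finset.prod_mul_distrib, Finset.prod_const]
    rw [chi, chi]
    ring
  -- Step 2
  have step2 : ∑ x, ∑ y, D x y * ∏ i ∈ U, sgnb (g (x i) (y i))
      = (K/4)^n * γ^(U.card) *
          ∑ a : Fin n → Bool, ∑ b : Fin n → Bool, C a b * chi U a * chi U b := by
    simp_rw [hgrp]
    rw [swap4]
    have : ∀ (a b : Fin n → Bool),
        (∑ x : Fin n → Fin m₁ → Bool, ∑ y : Fin n → Fin m₂ → Bool,
          (∏ i, ((if parityB S (x i) = a i then (1:ℝ) else 0) *
                 (if parityB T (y i) = b i then (1:ℝ) else 0) *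
                 (if i ∈ U then sgnb (g (x i) (y i)) else 1))) * C a b)
        = (K/4)^n * γ^(U.card) * (C a b * chi U a * chi U b) := by
      intro a b
      rw [pull2, hper a b]
      ring
    simp_rw [this, ← Finset.mul_sum]
  -- assemble
  rw [bFourier]
  simp_rw [hcard, mul_assoc, ← Finset.mul_sum]
  rw [step1, step2, bFourier_xorFiber]
  have hKn : ((K/2 : ℝ))^n ≠ 0 := by positivity
  have h2n : ((2:ℝ)^n) ≠ 0 := by positivity
  field_simp
  have h4 : (4:ℝ)^n = 2^(n*2) := by
    rw [show (4:ℝ) = 2^2 from by norm_num, ← pow_mul, Nat.mul_comm]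
  rw [← mul_pow, show (2:ℝ) * (K/4) = K/2 by ring]

end Key

lemma sep {A B : Type} [Fintype A] [Fintype B] (X : A → ℝ) (Y : B → ℝ) (c : ℝ) :
    ∑ s : A, ∑ t : B, X s * Y t * c = (∑ s : A, X s) * (∑ t : B, Y t) * c := by
  rw [Finset.sum_mul_sum, Finset.sum_mul]
  exact Finset.sum_congr rfl fun s _ => (Finset.sum_mul _ _ _).symm

lemma swap4' {A B C D : Type} [Fintype A] [Fintype B] [Fintype C] [Fintype D]
    (f : A → B → C → D → ℝ) :
    ∑ x : A, ∑ y : B, ∑ a : C, ∑ b : D, f x y a b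
      = ∑ a : C, ∑ b : D, ∑ x : A, ∑ y : B, f x y a b := by
  calc ∑ x : A, ∑ y : B, ∑ a : C, ∑ b : D, f x y a b
      = ∑ x : A, ∑ a : C, ∑ y : B, ∑ b : D, f x y a b :=
        Finset.sum_congr rfl fun x _ => Finset.sum_comm
    _ = ∑ a : C, ∑ x : A, ∑ y : B, ∑ b : D, f x y a b := Finset.sum_comm
    _ = ∑ a : C, ∑ x : A, ∑ b : D, ∑ y : B, f x y a b :=
        Finset.sum_congr rfl fun a _ => Finset.sum_congr rfl fun x _ => Finset.sum_comm
    _ = ∑ a : C, ∑ b : D, ∑ x : A, ∑ y : B, f x y a b :=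
        Finset.sum_congr rfl fun a _ => Finset.sum_comm

lemma sum_chi_mul {m : ℕ} (x x' : Fin m → Bool) :
    ∑ S : Finset (Fin m), chi S x * chi S x' = if x = x' then (2:ℝ)^m else 0 := by
  classical
  have h : ∀ S : Finset (Fin m), chi S x * chi S x'
      = ∏ j ∈ S, (sgnb (x j) * sgnb (x' j)) := by
    intro S; rw [chi, chi, ← Finset.prod_mul_distrib]
  simp_rw [h]
  have h2 := Finset.prod_add (fun j => sgnb (x j) * sgnb (x' j)) (fun _ => (1:ℝ)) Finset.univ
  simp only [Finset.prod_const_one, mul_one, Finset.powerset_univ] at h2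
  have h3 : ∑ S : Finset (Fin m), ∏ j ∈ S, (sgnb (x j) * sgnb (x' j))
      = ∏ j, (sgnb (x j) * sgnb (x' j) + 1) := h2.symm
  rw [h3]
  have hj : ∀ j : Fin m, sgnb (x j) * sgnb (x' j) + 1
      = 2 * (if x j = x' j then (1:ℝ) else 0) := by
    intro j; cases hxj : x j <;> cases hx'j : x' j <;> norm_num [sgnb]
  simp_rw [hj]
  rw [Finset.prod_mul_distrib, Finset.prod_const, Finset.prod_boole]
  simp [Finset.card_univ, funext_iff]

lemma parseval {m₁ m₂ : ℕ} (g : (Fin m₁ → Bool) → (Fin m₂ → Bool) → Bool) :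
    ∑ S : Finset (Fin m₁), ∑ T : Finset (Fin m₂), (gFourier g S T)^2 = 1 := by
  classical
  set K : ℝ := (2:ℝ)^m₁ * (2:ℝ)^m₂ with hK
  have hKpos : (0:ℝ) < K := by positivity
  have hgf : ∀ S T, gFourier g S T = K⁻¹ *
      ∑ q : (Fin m₁ → Bool) × (Fin m₂ → Bool), sgnb (g q.1 q.2) * chi S q.1 * chi T q.2 := by
    intro S T
    rw [gFourier, Fintype.sum_prod_type]
    rfl
  have hAA : ∑ S : Finset (Fin m₁), ∑ T : Finset (Fin m₂),
      (∑ q : (Fin m₁ → Bool) × (Fin m₂ → Bool),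
        sgnb (g q.1 q.2) * chi S q.1 * chi T q.2)^2 = K^2 := by
    have hsq : ∀ (S : Finset (Fin m₁)) (T : Finset (Fin m₂)),
        (∑ q : (Fin m₁ → Bool) × (Fin m₂ → Bool),
          sgnb (g q.1 q.2) * chi S q.1 * chi T q.2)^2
        = ∑ p : (Fin m₁ → Bool) × (Fin m₂ → Bool), ∑ q : (Fin m₁ → Bool) × (Fin m₂ → Bool),
            (sgnb (g p.1 p.2) * chi S p.1 * chi T p.2) *
            (sgnb (g q.1 q.2) * chi S q.1 * chi T q.2) := by
      intro S T; rw [sq, Finset.sum_mul_sum]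
    simp_rw [hsq]
    rw [swap4']
    have hin : ∀ p q : (Fin m₁ → Bool) × (Fin m₂ → Bool),
        (∑ S : Finset (Fin m₁), ∑ T : Finset (Fin m₂),
          (sgnb (g p.1 p.2) * chi S p.1 * chi T p.2) *
          (sgnb (g q.1 q.2) * chi S q.1 * chi T q.2))
        = (if p = q then K else 0) := by
      intro p q
      have e1 : ∀ (S : Finset (Fin m₁)) (T : Finset (Fin m₂)),
          (sgnb (g p.1 p.2) * chi S p.1 * chi T p.2) *
          (sgnb (g q.1 q.2) * chi S q.1 * chi T q.2)
          = (chi S p.1 * chi S q.1) * (chi T p.2 * chi T q.2) *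
              (sgnb (g p.1 p.2) * sgnb (g q.1 q.2)) := by intro S T; ring
      simp_rw [e1]
      rw [sep (fun S => chi S p.1 * chi S q.1) (fun T => chi T p.2 * chi T q.2)]
      rw [sum_chi_mul, sum_chi_mul]
      by_cases h1 : p.1 = q.1 <;> by_cases h2 : p.2 = q.2
      · have hpq : p = q := Prod.ext_iff.mpr ⟨h1, h2⟩
        subst hpq
        simp [sgnb_sq, hK]
      · have hpq : p ≠ q := fun h => h2 (congrArg Prod.snd h)
        simp [h1, h2, hpq]
      · have hpq : p ≠ q := fun h => h1 (congrArg Prod.fst h)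
        simp [h1, h2, hpq]
      · have hpq : p ≠ q := fun h => h1 (congrArg Prod.fst h)
        simp [h1, h2, hpq]
    rw [Finset.sum_congr rfl (fun p _ => Finset.sum_congr rfl (fun q _ => hin p q))]
    simp_rw [Finset.sum_ite_eq]
    simp only [Finset.mem_univ, if_true, Finset.sum_const, Finset.card_univ, nsmul_eq_mul]
    rw [Fintype.card_prod, Fintype.card_fun, Fintype.card_fun, Fintype.card_bool,
      Fintype.card_fin, Fintype.card_fin, hK, sq]
    push_cast
    ring
  simp_rw [hgf, mul_pow, ← Finset.mul_sum]
  rw [hAA]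
  field_simp


-- protocol lifting
def liftP {n m₁ m₂ : ℕ} (S : Finset (Fin m₁)) (T : Finset (Fin m₂)) :
    Protocol (Fin n → Bool) (Fin n → Bool) →
      Protocol (Fin n → Fin m₁ → Bool) (Fin n → Fin m₂ → Bool)
  | .leaf o => .leaf o
  | .nodeA f l r => .nodeA (fun x => f (fun i => parityB S (x i))) (liftP S T l) (liftP S T r)
  | .nodeB f l r => .nodeB (fun y => f (fun i => parityB T (y i))) (liftP S T l) (liftP S T r)

lemma depth_liftP {n m₁ m₂ : ℕ} (S : Finset (Fin m₁)) (T : Finset (Fin m₂))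
    (P : Protocol (Fin n → Bool) (Fin n → Bool)) :
    (liftP S T P).depth = P.depth := by
  induction P with
  | leaf o => rfl
  | nodeA f l r ihl ihr => simp [liftP, Protocol.depth, ihl, ihr]
  | nodeB f l r ihl ihr => simp [liftP, Protocol.depth, ihl, ihr]

lemma eval_liftP {n m₁ m₂ : ℕ} (S : Finset (Fin m₁)) (T : Finset (Fin m₂))
    (P : Protocol (Fin n → Bool) (Fin n → Bool)) (x : Fin n → Fin m₁ → Bool)
    (y : Fin n → Fin m₂ → Bool) :
    (liftP S T P).eval x y
      = P.eval (fun i => parityB S (x i)) (fun i => parityB T (y i)) := by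
  induction P with
  | leaf o => rfl
  | nodeA f l r ihl ihr => simp [liftP, Protocol.eval, ihl, ihr]
  | nodeB f l r ihl ihr => simp [liftP, Protocol.eval, ihl, ihr]


/-- **Fourier growth reduction: from `g`-fibers to XOR-fibers.**
Let `g` be a balanced gadget. If every randomized protocol of cost at most `d`
on the `g`-lifted domain has `g`-fiber with level-`k` Fourier weight at most
`B`, then every randomized protocol of cost at most `d` on
`{-1,1}^n × {-1,1}^n` has XOR-fiber with level-`k` weight at most
`(max_{S,T} |ĝ(S,T)|)^{-k}·B`; moreover `max_{S,T} |ĝ(S,T)| ≥ 2^{-(m₁+m₂)/2}`,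
so the weight is at most `2^{(m₁+m₂)k/2}·B`. -/
theorem xor_fiber_growth_from_gadget_fiber_growth
    (n m₁ m₂ k d : ℕ) (hn : 1 ≤ n) (hk : 1 ≤ k)
    (g : (Fin m₁ → Bool) → (Fin m₂ → Bool) → Bool) (hg : BalancedGadget g)
    (B : ℝ)
    (hyp : ∀ (ι : Type) [Fintype ι] (p : ι → ℝ)
      (P : ι → Protocol (Fin n → Fin m₁ → Bool) (Fin n → Fin m₂ → Bool)),
      (∀ i, 0 ≤ p i) → (∑ i, p i = 1) → (∀ i, (P i).depth ≤ d) →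
      levelWeight (gFiber g (rvalue p P)) k ≤ B) :
    ∀ (ι : Type) [Fintype ι] (p : ι → ℝ)
      (P : ι → Protocol (Fin n → Bool) (Fin n → Bool)),
      (∀ i, 0 ≤ p i) → (∑ i, p i = 1) → (∀ i, (P i).depth ≤ d) →
      (levelWeight (xorFiber (rvalue p P)) k
          ≤ ((⨆ q : Finset (Fin m₁) × Finset (Fin m₂), |gFourier g q.1 q.2|) ^ k)⁻¹ * B) ∧
      ((2 : ℝ) ^ (-((m₁ : ℝ) + m₂) / 2)
          ≤ ⨆ q : Finset (Fin m₁) × Finset (Fin m₂), |gFourier g q.1 q.2|) ∧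
      (levelWeight (xorFiber (rvalue p P)) k
          ≤ (2 : ℝ) ^ (((m₁ : ℝ) + m₂) * k / 2) * B) := by
  classical
  intro ι _ p P hp hps hd
  set f : Finset (Fin m₁) × Finset (Fin m₂) → ℝ := fun q => |gFourier g q.1 q.2| with hf
  -- maximizer
  obtain ⟨q0, hq0⟩ := Finite.exists_max f
  have hbdd : BddAbove (Set.range f) := (Set.finite_range f).bddAbove
  have hM : (⨆ q, f q) = f q0 :=
    le_antisymm (ciSup_le hq0) (le_ciSup hbdd q0)
  set M : ℝ := ⨆ q, f q with hMdef
  -- lower bound on M via Parseval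
  have hr : (2 : ℝ) ^ (-((m₁ : ℝ) + m₂) / 2) ≤ M := by
    have hsq : ((2 : ℝ) ^ (-((m₁ : ℝ) + m₂) / 2)) ^ 2 ≤ M ^ 2 := by
      have h1 : ((2 : ℝ) ^ (-((m₁ : ℝ) + m₂) / 2)) ^ 2
          = ((2:ℝ) ^ m₁ * (2:ℝ) ^ m₂)⁻¹ := by
        rw [← Real.rpow_natCast ((2:ℝ) ^ (-((m₁ : ℝ) + m₂) / 2)) 2,
          ← Real.rpow_mul (by norm_num : (0:ℝ) ≤ 2)]
        rw [show (-((m₁ : ℝ) + m₂) / 2) * (2:ℕ) = -((m₁:ℝ) + m₂) by push_cast; ring]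
        rw [Real.rpow_neg (by norm_num : (0:ℝ) ≤ 2)]
        congr 1
        rw [Real.rpow_add (by norm_num : (0:ℝ) < 2), Real.rpow_natCast, Real.rpow_natCast]
      rw [h1]
      -- Parseval: 1 ≤ (#pairs) * M^2
      have hpar := parseval g
      have hle : (1:ℝ) ≤ ((2:ℝ)^m₁ * (2:ℝ)^m₂) * M ^ 2 := by
        rw [← hpar]
        have : ∀ S : Finset (Fin m₁), ∀ T : Finset (Fin m₂),
            (gFourier g S T)^2 ≤ M^2 := by
          intro S T
          rw [← sq_abs]
          have := hq0 (S, T)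
          rw [hM]
          exact pow_le_pow_left₀ (abs_nonneg _) this 2
        calc ∑ S : Finset (Fin m₁), ∑ T : Finset (Fin m₂), (gFourier g S T)^2
            ≤ ∑ S : Finset (Fin m₁), ∑ T : Finset (Fin m₂), M^2 :=
              Finset.sum_le_sum fun S _ => Finset.sum_le_sum fun T _ => this S T
          _ = ((2:ℝ)^m₁ * (2:ℝ)^m₂) * M ^ 2 := by
              simp [Finset.sum_const, Finset.card_univ, Fintype.card_finset]
              push_cast
              ring
      have hKpos : (0:ℝ) < (2:ℝ)^m₁ * (2:ℝ)^m₂ := by positivity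
      rw [inv_eq_one_div, div_le_iff₀ hKpos]
      linarith [hle]
    have hMnn : 0 ≤ M := by
      rw [hM]; exact abs_nonneg _
    have hrnn : (0:ℝ) ≤ (2 : ℝ) ^ (-((m₁ : ℝ) + m₂) / 2) := le_of_lt (Real.rpow_pos_of_pos (by norm_num) _)
    calc (2 : ℝ) ^ (-((m₁ : ℝ) + m₂) / 2)
        = Real.sqrt (((2 : ℝ) ^ (-((m₁ : ℝ) + m₂) / 2))^2) := (Real.sqrt_sq hrnn).symm
      _ ≤ Real.sqrt (M^2) := Real.sqrt_le_sqrt hsq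
      _ = M := Real.sqrt_sq hMnn
  have hMpos : 0 < M := lt_of_lt_of_le (Real.rpow_pos_of_pos (by norm_num) _) hr
  -- the maximizer is nonempty on both sides
  have hγ : gFourier g q0.1 q0.2 ≠ 0 := by
    intro h0
    rw [hM] at hMpos
    simp only [hf, h0, abs_zero] at hMpos
    exact lt_irrefl 0 hMpos
  have hS : q0.1.Nonempty := by
    rw [Finset.nonempty_iff_ne_empty]
    intro h; exact hγ (hg _ _ (Or.inl h))
  have hT : q0.2.Nonempty := by
    rw [Finset.nonempty_iff_ne_empty]
    intro h; exact hγ (hg _ _ (Or.inr h))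
  -- apply hypothesis to the lifted protocol
  set P' : ι → Protocol (Fin n → Fin m₁ → Bool) (Fin n → Fin m₂ → Bool) :=
    fun i => liftP q0.1 q0.2 (P i) with hP'
  have hdep : ∀ i, (P' i).depth ≤ d := fun i => by
    rw [hP']; rw [depth_liftP]; exact hd i
  have hB0 := hyp ι p P' hp hps hdep
  -- identify the lifted rvalue
  have hrv : rvalue p P' = fun x y =>
      (rvalue p P) (fun i => parityB q0.1 (x i)) (fun i => parityB q0.2 (y i)) := by
    funext x y
    rw [rvalue]
    refine Finset.sum_congr rfl fun i _ => ?_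
    rw [hP', eval_liftP]
  -- levelWeight relation
  have hlw : levelWeight (gFiber g (rvalue p P')) k
      = M ^ k * levelWeight (xorFiber (rvalue p P)) k := by
    rw [levelWeight, levelWeight, Finset.mul_sum]
    refine Finset.sum_congr rfl fun U hU => ?_
    have hUk : U.card = k := (Finset.mem_filter.mp hU).2
    rw [hrv, key_s15 hg hS hT (rvalue p P) U, abs_mul, abs_pow, hUk, hM]
  have hMk : (0:ℝ) < M ^ k := pow_pos hMpos k
  have goal1 : levelWeight (xorFiber (rvalue p P)) k ≤ (M ^ k)⁻¹ * B := by
    calc levelWeight (xorFiber (rvalue p P)) k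
        = (M ^ k)⁻¹ * (M ^ k * levelWeight (xorFiber (rvalue p P)) k) := by
          field_simp
      _ ≤ (M ^ k)⁻¹ * B := by
          apply mul_le_mul_of_nonneg_left _ (le_of_lt (inv_pos.mpr hMk))
          rw [← hlw]
          exact hB0
  refine ⟨goal1, hr, ?_⟩
  -- B is nonnegative
  have hB : 0 ≤ B := by
    have h0 := hyp PUnit (fun _ => 1) (fun _ => Protocol.leaf true)
      (fun _ => by norm_num) (by simp) (fun _ => Nat.zero_le d)
    refine le_trans ?_ h0
    exact Finset.sum_nonneg fun U _ => abs_nonneg _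
  -- final comparison
  have hrk : ((2 : ℝ) ^ (-((m₁ : ℝ) + m₂) / 2)) ^ k
      = (2 : ℝ) ^ ((-((m₁ : ℝ) + m₂) / 2) * k) := by
    rw [← Real.rpow_natCast ((2:ℝ) ^ (-((m₁ : ℝ) + m₂) / 2)) k,
      ← Real.rpow_mul (by norm_num : (0:ℝ) ≤ 2)]
  have hineq : (M ^ k)⁻¹ ≤ (2 : ℝ) ^ (((m₁ : ℝ) + m₂) * k / 2) := by
    have h1 : ((2 : ℝ) ^ (-((m₁ : ℝ) + m₂) / 2)) ^ k ≤ M ^ k :=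
      pow_le_pow_left₀ (le_of_lt (Real.rpow_pos_of_pos (by norm_num) _)) hr k
    have h2 : (0:ℝ) < ((2 : ℝ) ^ (-((m₁ : ℝ) + m₂) / 2)) ^ k :=
      pow_pos (Real.rpow_pos_of_pos (by norm_num) _) k
    have h3 := inv_anti₀ h2 h1
    refine le_trans h3 ?_
    rw [hrk, ← Real.rpow_neg (by norm_num : (0:ℝ) ≤ 2)]
    apply le_of_eq
    congr 1
    push_cast
    ring
  calc levelWeight (xorFiber (rvalue p P)) k
      ≤ (M ^ k)⁻¹ * B := goal1
    _ ≤ (2 : ℝ) ^ (((m₁ : ℝ) + m₂) * k / 2) * B := mul_le_mul_of_nonneg_right hineq hB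
end
end
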